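/- arXiv:2402.12643 — 7 statements merged into one kernel-verified Lean document; each statement's English description precedes it below -/
import Mathlib

section
/- Let n ≥ 2 and let i, j, k, l ∈ {1,…,n} with i ≠ j and k ≠ l. Assume that it is not the case that (j = k and i ≠ l), and not the case that (i = l and j ≠ k). Then for all c, d ∈ [0,1] there exist c', d' ∈ [0,1] such that K^{kl}(d)·K^{ij}(c) = K^{ij}(d')·K^{kl}(c'). -/
/-!
Write `K^{ij}(c) = 1 + c • G^{ij}` with `G^{ij} = E_{ij} - E_{ii}`. Outside the two excluded
configurations the product `G^{kl} G^{ij}` is either `0` or minus one of its factors (same row, or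
`(k, l) = (j, i)`), so both `K^{kl}(d) K^{ij}(c)` and `K^{ij}(d') K^{kl}(c')` have the form
`1 + a • G^{ij} + b • G^{kl}`. Matching coefficients comes down to solving
`x * (1 - c (1 - d)) = d` in `[0, 1]`, which is possible because `d (1 - c) ≤ 1 - c`.
-/

noncomputable section

abbrev Pt : Type := EuclideanSpace ℝ (Fin 2)

/-- Convex hull of the vertices of a polygon. -/
def hull {n : ℕ} (P : Fin n → Pt) : Set Pt := convexHull ℝ (Set.range P)

/-- `P'` is degenerately contained in the `n`-gon `P`: there is an interpolating
`m`-gon with `m < n`. -/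
def DegenIn {k n : ℕ} (P' : Fin k → Pt) (P : Fin n → Pt) : Prop :=
  ∃ m : ℕ, m < n ∧ ∃ Q : Fin m → Pt, hull P' ⊆ hull Q ∧ hull Q ⊆ hull P

/-- `P'` is obtained from `P` by a single pull-in move. -/
def PullIn {n : ℕ} (P P' : Fin n → Pt) : Prop :=
  ∃ i j : Fin n, i ≠ j ∧ P' i ∈ segment ℝ (P i) (P j) ∧ ∀ k, k ≠ i → P' k = P k

/-- `P'` is obtained from `P` by a single push-out move (the inverse of a pull-in). -/
def PushOut {n : ℕ} (P P' : Fin n → Pt) : Prop :=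
  ∃ i j : Fin n, i ≠ j ∧ P i ∈ segment ℝ (P j) (P' i) ∧ ∀ k, k ≠ i → P' k = P k

/-- A chain of exactly `m` moves (given by the relation `R`) from `P` to `P'`. -/
def MoveChain {n : ℕ} (R : (Fin n → Pt) → (Fin n → Pt) → Prop) (m : ℕ)
    (P P' : Fin n → Pt) : Prop :=
  ∃ Q : Fin (m + 1) → Fin n → Pt, Q 0 = P ∧ Q (Fin.last m) = P' ∧
    ∀ s : Fin m, R (Q s.castSucc) (Q s.succ)

/-- `P'` is attainable from `P` by a decreasing path of polygons. -/
def Attainable {n : ℕ} (P P' : Fin n → Pt) : Prop :=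
  ∃ c : ℝ, 0 ≤ c ∧ ∃ F : ℝ → Fin n → Pt,
    ContinuousOn F (Set.Icc 0 c) ∧ F 0 = P ∧ F c = P' ∧
    ∀ t t' : ℝ, t ∈ Set.Icc 0 c → t' ∈ Set.Icc 0 c → t ≤ t' → hull (F t') ⊆ hull (F t)

/-- Determinant of the 3×3 matrix with rows (a,1), (b,1), (c,1). -/
def det3 (a b c : Pt) : ℝ := (b 0 - a 0) * (c 1 - a 1) - (b 1 - a 1) * (c 0 - a 0)

/-- `P` is a convex polygon oriented counterclockwise. -/
def CCW {n : ℕ} [NeZero n] (P : Fin n → Pt) : Prop :=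
  ∀ i j : Fin n, j ≠ i → j ≠ i + 1 → 0 < det3 (P i) (P (i + 1)) (P j)

/-- The boundary of a polygon: the union of its edges. -/
def bdry {n : ℕ} [NeZero n] (P : Fin n → Pt) : Set Pt :=
  ⋃ i : Fin n, segment ℝ (P i) (P (i + 1))

/-- The threshold set of `P`: attainable polygons with a vertex on `∂P`. -/
def Threshold {n : ℕ} [NeZero n] (P : Fin n → Pt) : Set (Fin n → Pt) :=
  {P' | Attainable P P' ∧ ∃ i, P' i ∈ bdry P}

/-- A neighbor pull-in move: a pull-in of a vertex toward one of its two neighbors. -/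
def NbrPullIn {n : ℕ} [NeZero n] (P P' : Fin n → Pt) : Prop :=
  ∃ i j : Fin n, (j = i - 1 ∨ j = i + 1) ∧ i ≠ j ∧ P' i ∈ segment ℝ (P i) (P j) ∧
    ∀ k, k ≠ i → P' k = P k

/-- The vestibule of `P`: polygons one neighbor pull-in move away from the threshold. -/
def Vestibule {n : ℕ} [NeZero n] (P : Fin n → Pt) : Set (Fin n → Pt) :=
  {P' | ∃ Q ∈ Threshold P, NbrPullIn Q P'}

/-- A polygon is set-convex if no vertex lies in the convex hull of the others. -/
def SetConvex {n : ℕ} (P : Fin n → Pt) : Prop :=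
  ∀ i : Fin n, P i ∉ convexHull ℝ (P '' {j | j ≠ i})

/-- A maximal degenerate `(n-1)`-gon inscribed in the convex `n`-gon `P`. -/
def MaxDegen {n : ℕ} [NeZero n] (P : Fin n → Pt) (Q : Fin (n - 1) → Pt) : Prop :=
  (∀ k, Q k ∈ bdry P) ∧
  ∀ k : Fin (n - 1),
    (∃ i : Fin n, Q k = P i ∧ ∀ k' : Fin (n - 1), k' ≠ k → Q k' ≠ P i) ∨
    (∃ i : Fin n, Q k ∈ segment ℝ (P i) (P (i + 1)) ∧ (∀ j : Fin n, Q k ≠ P j) ∧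
      ∀ k' : Fin (n - 1), k' ≠ k → Q k' ∉ segment ℝ (P i) (P (i + 1)))

/-- Area of a polygon: the Lebesgue measure of its convex hull. -/
def area {n : ℕ} (P : Fin n → Pt) : ℝ := (MeasureTheory.volume (hull P)).toReal

/-- `P'` is in the midpoint pockets of `P`. -/
def MidpointPockets {n : ℕ} [NeZero n] (P P' : Fin n → Pt) : Prop :=
  ∀ i : Fin n,
    P' i ∈ convexHull ℝ
      ({midpoint ℝ (P (i - 1)) (P i), P i, midpoint ℝ (P i) (P (i + 1))} : Set Pt) ∧
    P i ∉ segment ℝ (midpoint ℝ (P (i - 1)) (P i)) (midpoint ℝ (P i) (P (i + 1)))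

/-- A row stochastic matrix. -/
def RowStochastic {n : ℕ} (D : Matrix (Fin n) (Fin n) ℝ) : Prop :=
  (∀ i j, 0 ≤ D i j) ∧ ∀ i, ∑ j, D i j = 1

/-- A continuous-time non-homogeneous Markov process of `n` states. -/
def IsMarkovProcess (n : ℕ) (M : ℝ → ℝ → Matrix (Fin n) (Fin n) ℝ) : Prop :=
  ContinuousOn (fun p : ℝ × ℝ => M p.1 p.2) {p : ℝ × ℝ | 0 ≤ p.1 ∧ p.1 ≤ p.2} ∧
  (∀ s t : ℝ, 0 ≤ s → s ≤ t → IsUnit (M s t).det ∧ RowStochastic (M s t)) ∧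
  (∀ r s t : ℝ, 0 ≤ r → r ≤ s → s ≤ t → M r t = M r s * M s t) ∧
  (∀ t : ℝ, 0 ≤ t → M t t = 1)

/-- An embeddable stochastic matrix. -/
def Embeddable {n : ℕ} (D : Matrix (Fin n) (Fin n) ℝ) : Prop :=
  ∃ M : ℝ → ℝ → Matrix (Fin n) (Fin n) ℝ, IsMarkovProcess n M ∧
    ∃ s t : ℝ, 0 ≤ s ∧ s ≤ t ∧ D = M s t

/-- The elementary stochastic matrix `K^{ij}(c)`. -/
def elemStoch {n : ℕ} (i j : Fin n) (c : ℝ) : Matrix (Fin n) (Fin n) ℝ :=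
  1 + c • (Matrix.single i j 1 - Matrix.single i i 1)

open Matrix Set

lemma mul_one_sub_mem_Icc {c d : ℝ} (hc : c ∈ Icc (0 : ℝ) 1) (hd : d ∈ Icc (0 : ℝ) 1) :
    c * (1 - d) ∈ Icc (0 : ℝ) 1 :=
  unitInterval.mul_mem hc (Icc.mem_iff_one_sub_mem.mp hd)

lemma exists_mem_Icc_mul_one_sub_mul_eq {c d : ℝ} (hc : c ∈ Icc (0 : ℝ) 1)
    (hd : d ∈ Icc (0 : ℝ) 1) : ∃ x ∈ Icc (0 : ℝ) 1, x * (1 - c * (1 - d)) = d := by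
  rcases (mul_one_sub_mem_Icc hc hd).2.lt_or_eq with hlt | heq
  · have hpos : 0 < 1 - c * (1 - d) := sub_pos.mpr hlt
    refine ⟨d / (1 - c * (1 - d)), unitInterval.div_mem hd.1 hpos.le ?_,
      div_mul_cancel₀ d hpos.ne'⟩
    nlinarith [hc.2, hd.2]
  · -- `c (1 - d) = 1` forces `c = 1` and `d = 0`
    exact ⟨0, unitInterval.zero_mem, by nlinarith [hc.1, hc.2, hd.1, hd.2]⟩

namespace elemStoch

variable {n : ℕ}

def gen (i j : Fin n) : Matrix (Fin n) (Fin n) ℝ := single i j 1 - single i i 1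

lemma eq_one_add_smul_gen (i j : Fin n) (c : ℝ) : elemStoch i j c = 1 + c • gen i j := rfl

lemma mul_eq (i j k l : Fin n) (c d : ℝ) :
    elemStoch k l d * elemStoch i j c =
      1 + c • gen i j + d • gen k l + (d * c) • (gen k l * gen i j) := by
  simp only [eq_one_add_smul_gen, add_mul, mul_add, one_mul, mul_one, smul_mul_assoc,
    mul_smul_comm]
  module

lemma gen_mul_gen_of_ne {i j k l : Fin n} (hki : k ≠ i) (hli : l ≠ i) :
    gen k l * gen i j = 0 := by
  simp [gen, sub_mul, mul_sub, single_mul_single_of_ne _ _ _ _ hki,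
    single_mul_single_of_ne _ _ _ _ hli]

lemma gen_mul_gen_same_row {i j l : Fin n} (hli : l ≠ i) : gen i l * gen i j = -gen i j := by
  simp only [gen, sub_mul, mul_sub, single_mul_single_same, single_mul_single_of_ne _ _ _ _ hli,
    mul_one]
  abel

lemma gen_mul_gen_swap {i j : Fin n} (hij : i ≠ j) : gen j i * gen i j = -gen j i := by
  simp only [gen, sub_mul, mul_sub, single_mul_single_same,
    single_mul_single_of_ne _ _ _ _ hij.symm, mul_one]
  abel

lemma mul_comm_of_ne {i j k l : Fin n} (hik : i ≠ k) (hil : i ≠ l) (hjk : j ≠ k) (c d : ℝ) :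
    elemStoch k l d * elemStoch i j c = elemStoch i j c * elemStoch k l d := by
  rw [mul_eq, mul_eq, gen_mul_gen_of_ne hik.symm hil.symm, gen_mul_gen_of_ne hik hjk]
  module

lemma exists_mul_eq_mul_same_row {i j l : Fin n} (hij : i ≠ j) (hil : i ≠ l) {c d : ℝ}
    (hc : c ∈ Icc (0 : ℝ) 1) (hd : d ∈ Icc (0 : ℝ) 1) :
    ∃ c' d' : ℝ, c' ∈ Icc (0 : ℝ) 1 ∧ d' ∈ Icc (0 : ℝ) 1 ∧
      elemStoch i l d * elemStoch i j c = elemStoch i j d' * elemStoch i l c' := by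
  obtain ⟨x, hx, hxd⟩ := exists_mem_Icc_mul_one_sub_mul_eq hc hd
  refine ⟨x, c * (1 - d), hx, mul_one_sub_mem_Icc hc hd, ?_⟩
  rw [mul_eq, mul_eq, gen_mul_gen_same_row hil.symm, gen_mul_gen_same_row hij.symm]
  match_scalars
  · rfl
  · ring
  · linear_combination -hxd

lemma exists_mul_eq_mul_swap {i j : Fin n} (hij : i ≠ j) {c d : ℝ}
    (hc : c ∈ Icc (0 : ℝ) 1) (hd : d ∈ Icc (0 : ℝ) 1) :
    ∃ c' d' : ℝ, c' ∈ Icc (0 : ℝ) 1 ∧ d' ∈ Icc (0 : ℝ) 1 ∧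
      elemStoch j i d * elemStoch i j c = elemStoch i j d' * elemStoch j i c' := by
  obtain ⟨x, hx, hxc⟩ := exists_mem_Icc_mul_one_sub_mul_eq hd hc
  refine ⟨d * (1 - c), x, mul_one_sub_mem_Icc hd hc, hx, ?_⟩
  rw [mul_eq, mul_eq, gen_mul_gen_swap hij, gen_mul_gen_swap hij.symm]
  match_scalars
  · rfl
  · linear_combination -hxc
  · ring

end elemStoch

theorem statement3_general (n : ℕ) (i j k l : Fin n)
    (hij : i ≠ j) (hkl : k ≠ l)
    (h1 : ¬(j = k ∧ i ≠ l)) (h2 : ¬(i = l ∧ j ≠ k)) :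
    ∀ c d : ℝ, c ∈ Set.Icc (0 : ℝ) 1 → d ∈ Set.Icc (0 : ℝ) 1 →
      ∃ c' d' : ℝ, c' ∈ Set.Icc (0 : ℝ) 1 ∧ d' ∈ Set.Icc (0 : ℝ) 1 ∧
        elemStoch k l d * elemStoch i j c = elemStoch i j d' * elemStoch k l c' := by
  intro c d hc hd
  by_cases hik : i = k
  · subst hik
    exact elemStoch.exists_mul_eq_mul_same_row hij hkl hc hd
  by_cases hjk : j = k
  · obtain rfl : i = l := by_contra fun hil ↦ h1 ⟨hjk, hil⟩
    subst hjk
    exact elemStoch.exists_mul_eq_mul_swap hij hc hd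
  have hil : i ≠ l := fun hil ↦ h2 ⟨hil, hjk⟩
  exact ⟨d, c, hd, hc, elemStoch.mul_comm_of_ne hik hil hjk c d⟩

/-- Commutation of elementary stochastic matrices outside the two
exceptional cases. -/
theorem statement3 (n : ℕ) (hn : 2 ≤ n) (i j k l : Fin n)
    (hij : i ≠ j) (hkl : k ≠ l)
    (h1 : ¬(j = k ∧ i ≠ l)) (h2 : ¬(i = l ∧ j ≠ k)) :
    ∀ c d : ℝ, c ∈ Set.Icc (0 : ℝ) 1 → d ∈ Set.Icc (0 : ℝ) 1 →
      ∃ c' d' : ℝ, c' ∈ Set.Icc (0 : ℝ) 1 ∧ d' ∈ Set.Icc (0 : ℝ) 1 ∧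
        elemStoch k l d * elemStoch i j c = elemStoch i j d' * elemStoch k l c' :=
  statement3_general n i j k l hij hkl h1 h2

end
end

section
/- For any n-gon P (n ≥ 3), the set D_P of all n-gons degenerately contained in P is a compact subset of (ℝ²)^n. -/
noncomputable section

theorem mem_convexHull_range_iff_exists_stdSimplex {𝕜 E ι : Type*} [Field 𝕜] [LinearOrder 𝕜]
    [IsStrictOrderedRing 𝕜] [AddCommGroup E] [Module 𝕜 E] [Fintype ι] {v : ι → E} {x : E} :
    x ∈ convexHull 𝕜 (Set.range v) ↔ ∃ w ∈ stdSimplex 𝕜 ι, ∑ i, w i • v i = x := by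
  classical
  constructor
  · intro hx
    obtain ⟨s, w, hw₀, hw₁, rfl⟩ := (convexHull_range_eq_exists_affineCombination v).subset hx
    have hw₁' : ∑ i, Set.indicator (↑s) w i = 1 := by
      rwa [Finset.sum_indicator_subset _ s.subset_univ]
    refine ⟨Set.indicator (↑s) w, ⟨fun i => ?_, hw₁'⟩, ?_⟩
    · by_cases hi : i ∈ s <;> simp [hi, hw₀]
    · rw [Finset.affineCombination_indicator_subset _ _ s.subset_univ,
        Finset.affineCombination_eq_linear_combination _ _ _ hw₁']
  · rintro ⟨w, ⟨hw₀, hw₁⟩, hx⟩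
    exact mem_convexHull_of_exists_fintype w v hw₀ hw₁ Set.mem_range_self hx

theorem isCompact_setOf_forall_mem_convexHull_range {E ι κ : Type*} [AddCommGroup E] [Module ℝ E]
    [TopologicalSpace E] [ContinuousAdd E] [ContinuousSMul ℝ E] [Fintype ι] [Fintype κ]
    {K : Set E} (hK : IsCompact K) :
    IsCompact
      {x : κ → E | ∃ v : ι → E, (∀ j, v j ∈ K) ∧ ∀ i, x i ∈ convexHull ℝ (Set.range v)} := by
  have hset : {x : κ → E | ∃ v : ι → E, (∀ j, v j ∈ K) ∧ ∀ i, x i ∈ convexHull ℝ (Set.range v)} =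
      (fun p : (ι → E) × (κ → ι → ℝ) => fun i => ∑ j, p.2 i j • p.1 j) ''
        (Set.univ.pi (fun _ => K) ×ˢ Set.univ.pi fun _ => stdSimplex ℝ ι) := by
    ext x
    simp only [mem_convexHull_range_iff_exists_stdSimplex, Set.mem_ofPred_eq, Set.mem_image,
      Set.mem_prod, Set.mem_univ_pi, Prod.exists]
    constructor
    · rintro ⟨v, hv, hx⟩
      choose w hw hwx using hx
      exact ⟨v, w, ⟨hv, hw⟩, funext hwx⟩
    · rintro ⟨v, w, ⟨hv, hw⟩, rfl⟩
      exact ⟨v, hv, fun i => ⟨w i, hw i, rfl⟩⟩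
  rw [hset]
  exact ((isCompact_univ_pi fun _ => hK).prod
    (isCompact_univ_pi fun _ => isCompact_stdSimplex ℝ ι)).image (by fun_prop)

theorem convex_hull {k : ℕ} (P : Fin k → Pt) : Convex ℝ (hull P) :=
  convex_convexHull ℝ _

theorem isCompact_hull {k : ℕ} (P : Fin k → Pt) : IsCompact (hull P) :=
  (Set.finite_range P).isCompact_convexHull (𝕜 := ℝ)

theorem hull_subset_iff {k : ℕ} {P : Fin k → Pt} {C : Set Pt} (hC : Convex ℝ C) :
    hull P ⊆ C ↔ ∀ i, P i ∈ C := by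
  rw [hull, hC.convexHull_subset_iff, Set.range_subset_iff]

theorem statement4_general (n : ℕ) (P : Fin n → Pt) :
    IsCompact {P' : Fin n → Pt | DegenIn P' P} := by
  have hset : {P' : Fin n → Pt | DegenIn P' P} =
      ⋃ m ∈ Set.Iio n, {P' | ∃ Q : Fin m → Pt, (∀ j, Q j ∈ hull P) ∧ ∀ i, P' i ∈ hull Q} := by
    ext P'
    simp only [DegenIn, hull_subset_iff (convex_hull _), Set.mem_ofPred_eq,
      Set.mem_iUnion, Set.mem_Iio, exists_prop, and_comm]
  rw [hset]
  exact (Set.finite_Iio n).isCompact_biUnion fun m _ =>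
    isCompact_setOf_forall_mem_convexHull_range (isCompact_hull P)

/-- For any `n`-gon `P` (`n ≥ 3`), the set `D_P` of `n`-gons
degenerately contained in `P` is compact. -/
theorem statement4 (n : ℕ) (hn : 3 ≤ n) (P : Fin n → Pt) :
    IsCompact {P' : Fin n → Pt | DegenIn P' P} :=
  statement4_general n P

end
end

section
/- Let P be a convex n-gon (oriented counterclockwise) and let P' be an n-gon inscribed in P, non-degenerately contained in P, and such that at least one vertex of P' equals a vertex of P. Then there is a sequence of at most n−1 push-out moves transforming P' into an n-gon P'' whose set of vertices equals the set of vertices of P (every vertex of P is occupied by a vertex of P''). -/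
noncomputable section

/-!
Walk along `∂P` from the occupied vertex `v 0 = P j₀`, through `v d = P (j₀ + d)`, and give every
vertex of `P'` its position in `[0, n]` along the way; list the vertices of `P'` by increasing
position `q 0 = 0 ≤ q 1 ≤ ⋯ ≤ q (n-1)`. Non-degeneracy forces `k - 1 ≤ q k ≤ k + 1`: if
`q k < k - 1`, the vertices `0, …, k` of `P'` lie in the hull of `v 0, …, v (k-1)`, and replacing
them by these `k` points gives an `(n-1)`-gon between `P'` and `P`; the other bound is symmetric.
Vertex `k` is then pushed onto `v k`: first the trailing ones (those on the edge `[v (k-1), v k]`)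
in increasing order, each away from vertex `k - 1`, then the others (on `[v k, v (k+1)]`) in
decreasing order, each away from vertex `k + 1`. Vertex `0` never moves, so at most `n - 1` moves
are made.
-/

open Fin.NatCast Fin.CommRing Finset

section BoundaryPath

variable {E : Type*} [AddCommGroup E] [Module ℝ E]

def boundaryPath (v : ℕ → E) (p : ℝ) : E :=
  AffineMap.lineMap (v ⌊p⌋₊) (v (⌊p⌋₊ + 1)) (p - ⌊p⌋₊)

variable (v : ℕ → E) {p p' : ℝ}

theorem boundaryPath_eq_lineMap (d : ℕ) (hd : d ≤ p) (hp : p ≤ d + 1) :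
    boundaryPath v p = AffineMap.lineMap (v d) (v (d + 1)) (p - d) := by
  rcases hp.lt_or_eq with hp | rfl
  · rw [boundaryPath, (Nat.floor_eq_iff ((Nat.cast_nonneg d).trans hd)).2 ⟨hd, hp⟩]
  · have : ⌊(d : ℝ) + 1⌋₊ = d + 1 := by exact_mod_cast Nat.floor_natCast (d + 1)
    simp [boundaryPath, this]

@[simp]
theorem boundaryPath_natCast (d : ℕ) : boundaryPath v d = v d := by
  simp [boundaryPath_eq_lineMap v d le_rfl (by linarith)]

theorem boundaryPath_mem_segment (d : ℕ) (hd : d ≤ p) (hpp' : p ≤ p') (hp' : p' ≤ d + 1) :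
    boundaryPath v p' ∈ segment ℝ (boundaryPath v p) (v (d + 1)) := by
  rw [boundaryPath_eq_lineMap v d hd (hpp'.trans hp'),
    boundaryPath_eq_lineMap v d (hd.trans hpp') hp']
  nth_rw 2 [← AffineMap.lineMap_apply_one (k := ℝ) (v d) (v (d + 1))]
  rw [← image_segment]
  exact ⟨p' - d, by rw [segment_eq_Icc (by linarith)]; constructor <;> linarith, rfl⟩

theorem boundaryPath_mem_convexHull {a b : ℕ} (ha : a ≤ p) (hb : p ≤ b) :
    boundaryPath v p ∈ convexHull ℝ (v '' Set.Icc a b) := by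
  rcases hb.lt_or_eq with hb | rfl
  · set d := ⌊p⌋₊
    have hp0 : 0 ≤ p := (Nat.cast_nonneg a).trans ha
    have had : a ≤ d := Nat.le_floor ha
    have hdb : d + 1 ≤ b := Nat.floor_lt hp0 |>.2 hb
    have hseg := boundaryPath_mem_segment v d le_rfl (Nat.floor_le hp0) (Nat.lt_floor_add_one p).le
    rw [boundaryPath_natCast] at hseg
    refine segment_subset_convexHull ?_ ?_ hseg <;>
      exact Set.mem_image_of_mem v (Set.mem_Icc.2 ⟨by omega, by omega⟩)
  · rw [boundaryPath_natCast]
    exact subset_convexHull ℝ _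
      (Set.mem_image_of_mem v (Set.mem_Icc.2 ⟨by exact_mod_cast ha, le_rfl⟩))

variable {v} in
theorem boundaryPath_mem_of_convex {K : Set E} (hK : Convex ℝ K) (hv : ∀ d, v d ∈ K)
    (hp : 0 ≤ p) :
    boundaryPath v p ∈ K :=
  convexHull_min (by rintro _ ⟨d, -, rfl⟩; exact hv d) hK
    (boundaryPath_mem_convexHull v (a := 0) (by simpa using hp) (Nat.le_ceil p))

end BoundaryPath

namespace MoveChain

variable {n : ℕ} {Rel : (Fin n → Pt) → (Fin n → Pt) → Prop} {A B C : Fin n → Pt} {a b : ℕ}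

theorem iff_exists_nat :
    MoveChain Rel a A B ↔
      ∃ Q : ℕ → Fin n → Pt, Q 0 = A ∧ Q a = B ∧ ∀ s < a, Rel (Q s) (Q (s + 1)) := by
  constructor
  · rintro ⟨Q, h0, ha, hs⟩
    refine ⟨fun s => if h : s ≤ a then Q ⟨s, by omega⟩ else B, by simpa using h0,
      by simpa [Fin.last] using ha, fun s hsa => ?_⟩
    simpa [hsa.le, Nat.succ_le_of_lt hsa] using hs ⟨s, hsa⟩
  · rintro ⟨Q, h0, ha, hs⟩
    exact ⟨fun s => Q s, by simpa using h0, ha, fun s => hs s s.isLt⟩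

theorem refl (A : Fin n → Pt) : MoveChain Rel 0 A A :=
  iff_exists_nat.2 ⟨fun _ => A, rfl, rfl, fun _ h => absurd h (Nat.not_lt_zero _)⟩

theorem single (h : Rel A B) : MoveChain Rel 1 A B :=
  iff_exists_nat.2 ⟨fun s => if s = 0 then A else B, rfl, rfl, fun s hs => by
    obtain rfl : s = 0 := by omega
    simpa using h⟩

theorem trans (hAB : MoveChain Rel a A B) (hBC : MoveChain Rel b B C) :
    MoveChain Rel (a + b) A C := by
  obtain ⟨Q, hQ0, hQa, hQ⟩ := iff_exists_nat.1 hAB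
  obtain ⟨Q', hQ'0, hQ'b, hQ'⟩ := iff_exists_nat.1 hBC
  refine iff_exists_nat.2
    ⟨fun s => if s ≤ a then Q s else Q' (s - a), by simpa using hQ0, ?_, fun s hs => ?_⟩
  · dsimp only
    split_ifs with h
    · obtain rfl : b = 0 := by omega
      simpa [hQa, hQ'0] using hQ'b
    · simpa using hQ'b
  rcases lt_trichotomy s a with hsa | rfl | hsa
  · simpa [hsa.le, Nat.succ_le_of_lt hsa] using hQ s hsa
  · simpa [hQa, ← hQ'0] using hQ' 0 (by omega)
  · simpa [hsa.not_ge, show ¬ s + 1 ≤ a by omega, show s + 1 - a = s - a + 1 by omega]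
      using hQ' (s - a) (by omega)

theorem map {Rel' : (Fin n → Pt) → (Fin n → Pt) → Prop} (f : (Fin n → Pt) → Fin n → Pt)
    (hf : ∀ A B, Rel A B → Rel' (f A) (f B)) (h : MoveChain Rel a A B) :
    MoveChain Rel' a (f A) (f B) := by
  obtain ⟨Q, h0, ha, hs⟩ := h
  exact ⟨f ∘ Q, by simp [h0], by simp [ha], fun s => hf _ _ (hs s)⟩

theorem exists_of_steps (W : ℕ → Fin n → Pt) (S : Finset ℕ) (N : ℕ)
    (h : ∀ j < N, W (j + 1) = W j ∨ j ∈ S ∧ Rel (W j) (W (j + 1))) :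
    ∃ k ≤ #{j ∈ S | j < N}, MoveChain Rel k (W 0) (W N) := by
  induction N with
  | zero => exact ⟨0, Nat.zero_le _, refl _⟩
  | succ N ih =>
    obtain ⟨k, hk, hchain⟩ := ih fun j hj => h j (by omega)
    have hmono : #{j ∈ S | j < N} ≤ #{j ∈ S | j < N + 1} :=
      card_le_card fun j hj => by
        simp only [mem_filter] at hj ⊢; exact ⟨hj.1, by omega⟩
    rcases h N (by omega) with hsame | ⟨hN, hmove⟩
    · exact ⟨k, hk.trans hmono, hsame ▸ hchain⟩
    · refine ⟨k + 1, ?_, hchain.trans (single hmove)⟩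
      have : {j ∈ S | j < N + 1} = insert N {j ∈ S | j < N} := by
        ext j; simp only [mem_filter, mem_insert]; grind
      rw [this, card_insert_of_notMem (by simp)]
      omega

end MoveChain

theorem pushOut_update {n : ℕ} {A : Fin n → Pt} {i j : Fin n} (hij : i ≠ j) {x : Pt}
    (h : A i ∈ segment ℝ (A j) x) : PushOut A (Function.update A i x) :=
  ⟨i, j, hij, by simpa [hij.symm] using h, fun _ hk => Function.update_of_ne hk _ _⟩

theorem PushOut.comp_perm {n : ℕ} {A B : Fin n → Pt} (h : PushOut A B) (τ : Equiv.Perm (Fin n)) :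
    PushOut (A ∘ τ) (B ∘ τ) := by
  obtain ⟨i, j, hij, hseg, hframe⟩ := h
  exact ⟨τ.symm i, τ.symm j, by simpa using hij, by simpa using hseg,
    fun k hk => hframe _ fun h => hk (by simp [← h])⟩

section Snap

variable {n : ℕ} (v : ℕ → Pt) (Y : Fin n → Pt)

open Classical in
def snap (M : Set (Fin n)) : Fin n → Pt := M.piecewise (fun k => v k) Y

variable {v Y} {M : Set (Fin n)}

theorem snap_of_mem {k : Fin n} (hk : k ∈ M) : snap v Y M k = v k := by
  simp [snap, Set.piecewise, hk]

theorem snap_of_notMem {k : Fin n} (hk : k ∉ M) : snap v Y M k = Y k := by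
  simp [snap, Set.piecewise, hk]

theorem snap_insert (k : Fin n) : snap v Y (insert k M) = Function.update (snap v Y M) k (v k) := by
  funext l
  by_cases hl : l = k
  · subst hl; simp [snap_of_mem]
  · rw [Function.update_of_ne hl]
    by_cases hlM : l ∈ M
    · rw [snap_of_mem hlM, snap_of_mem (Set.mem_insert_of_mem _ hlM)]
    · rw [snap_of_notMem hlM, snap_of_notMem (by simp [hl, hlM])]

theorem snap_insert_of_eq {k : Fin n} (hk : Y k = v k) : snap v Y (insert k M) = snap v Y M := by
  rw [snap_insert]
  by_cases hkM : k ∈ M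
  · simp [snap_of_mem hkM]
  · simp [snap_of_notMem (v := v) hkM, hk]

theorem pushOut_snap_insert {k j : Fin n} (hk : k ∉ M) (hjk : j ≠ k)
    (h : Y k ∈ segment ℝ (snap v Y M j) (v k)) :
    PushOut (snap v Y M) (snap v Y (insert k M)) := by
  rw [snap_insert]
  exact pushOut_update hjk.symm (by rwa [snap_of_notMem hk])

end Snap

theorem degenIn_of_finset {k n : ℕ} {P' : Fin k → Pt} {P : Fin n → Pt} (s : Finset Pt)
    (hs : #s < n) (hP' : ∀ i, P' i ∈ convexHull ℝ (s : Set Pt)) (hsP : (s : Set Pt) ⊆ hull P) :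
    DegenIn P' P := by
  have hrange : Set.range (fun i => (s.equivFin.symm i : Pt)) = s := by
    ext x; exact ⟨by rintro ⟨i, rfl⟩; simp, fun hx => ⟨s.equivFin ⟨x, hx⟩, by simp⟩⟩
  refine ⟨#s, hs, fun i => s.equivFin.symm i, ?_, ?_⟩ <;> simp only [hull, hrange]
  · exact convexHull_min (Set.range_subset_iff.2 hP') (convex_convexHull ℝ _)
  · exact convexHull_min hsP (convex_convexHull ℝ _)

structure SortedPositions {n : ℕ} [NeZero n] (v : ℕ → Pt) (Y : Fin n → Pt) (q : Fin n → ℝ) :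
    Prop where
  mono : Monotone q
  zero : q 0 = 0
  le : ∀ k, q k ≤ n
  eq : ∀ k, Y k = boundaryPath v (q k)

def trailing {n : ℕ} (q : Fin n → ℝ) : Set (Fin n) := {k | q k ≤ k}

namespace SortedPositions

variable {n : ℕ} [NeZero n] {v : ℕ → Pt} {Y : Fin n → Pt} {q : Fin n → ℝ}
  (h : SortedPositions v Y q)
include h

theorem nonneg (k : Fin n) : 0 ≤ q k := h.zero ▸ h.mono (Fin.zero_le k)

theorem eq_zero : Y 0 = v 0 := by
  rw [h.eq, h.zero]; exact_mod_cast boundaryPath_natCast v 0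

theorem union_image_subset_hull {P : Fin n → Pt} (hvP : ∀ d, v d ∈ hull P) (A : Finset ℕ)
    (B : Finset (Fin n)) : ((A.image v ∪ B.image Y : Finset Pt) : Set Pt) ⊆ hull P := by
  intro x hx
  rcases mem_union.1 hx with hx | hx <;> obtain ⟨l, -, rfl⟩ := mem_image.1 hx
  · exact hvP l
  · exact h.eq l ▸ boundaryPath_mem_of_convex (convex_convexHull ℝ _) hvP (h.nonneg l)

theorem coe_le_add_one {P : Fin n → Pt} (hvP : ∀ d, v d ∈ hull P) (hnd : ¬ DegenIn Y P)
    (k : Fin n) : (k : ℝ) ≤ q k + 1 := by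
  by_contra! hk
  have hk2 : 2 ≤ (k : ℕ) := by
    have : (1 : ℝ) < k := by linarith [h.nonneg k]
    exact_mod_cast this
  apply hnd
  refine degenIn_of_finset ((range k).image v ∪ (Ioi k).image Y) ?_ (fun l => ?_) ?_
  · calc #((range k).image v ∪ (Ioi k).image Y)
        ≤ k + (n - 1 - k) := (card_union_le _ _).trans (add_le_add (card_image_le.trans
          (card_range _).le) (card_image_le.trans (Fin.card_Ioi k).le))
      _ < n := by omega
  · rcases le_or_gt l k with hl | hl
    · have hb : q l ≤ ((k - 1 : ℕ) : ℝ) := by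
        rw [Nat.cast_sub (by omega)]; push_cast; linarith [h.mono hl]
      refine convexHull_mono ?_ (h.eq l ▸ boundaryPath_mem_convexHull v (a := 0)
        (by simpa using h.nonneg l) hb)
      rintro _ ⟨d, hd, rfl⟩
      exact mem_union_left _ (mem_image_of_mem v (mem_range.2 (by simp at hd; omega)))
    · exact subset_convexHull ℝ _ (mem_union_right _ (mem_image_of_mem Y (mem_Ioi.2 hl)))
  · exact h.union_image_subset_hull hvP _ _

theorem le_coe_add_one {P : Fin n → Pt} (hv : Function.Periodic v n) (hvP : ∀ d, v d ∈ hull P)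
    (hnd : ¬ DegenIn Y P) (k : Fin n) : q k ≤ k + 1 := by
  by_contra! hk
  have hk1 : 1 ≤ (k : ℕ) := by
    by_contra! hk0
    have : k = 0 := Fin.ext (by simpa using hk0)
    subst this
    simp [h.zero] at hk
    linarith
  apply hnd
  refine degenIn_of_finset ((Icc ((k : ℕ) + 1) n).image v ∪ (Ioo 0 k).image Y) ?_ (fun l => ?_)
    (h.union_image_subset_hull hvP _ _)
  · calc #((Icc ((k : ℕ) + 1) n).image v ∪ (Ioo 0 k).image Y)
        ≤ (n + 1 - (k + 1)) + (k - 0 - 1) := (card_union_le _ _).trans (add_le_add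
          (card_image_le.trans (Nat.card_Icc _ _).le)
          (card_image_le.trans (by simp [Fin.card_Ioo])))
      _ < n := by omega
  · by_cases hl0 : l = 0
    · subst hl0
      rw [h.eq_zero, ← hv.eq]
      exact subset_convexHull ℝ _ (mem_union_left _ (mem_image_of_mem v
        (mem_Icc.2 ⟨by omega, le_rfl⟩)))
    rcases lt_or_ge l k with hl | hl
    · exact subset_convexHull ℝ _ (mem_union_right _ (mem_image_of_mem Y
        (mem_Ioo.2 ⟨Fin.pos_iff_ne_zero.2 hl0, hl⟩)))
    · have ha : (((k + 1 : ℕ)) : ℝ) ≤ q l := by push_cast; linarith [h.mono hl]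
      refine convexHull_mono ?_ (h.eq l ▸ boundaryPath_mem_convexHull v ha (h.le l))
      rintro _ ⟨d, hd, rfl⟩
      exact mem_union_left _ (mem_image_of_mem v (by simpa using hd))

/-- A trailing vertex `k` lies on the edge `[v (k-1), v k]`, behind vertex `k - 1` when that
one is not trailing; so once the trailing vertices before it sit on their targets, `k` can be
pushed onto `v k` away from vertex `k - 1`. -/
theorem pushOut_snap_insert_trailing (hC : ∀ k : Fin n, (k : ℝ) ≤ q k + 1) {k : Fin n}
    (hk : k ∈ trailing q) (hk0 : k ≠ 0) :
    PushOut (snap v Y (trailing q ∩ {l | (l : ℕ) < k}))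
      (snap v Y (insert k (trailing q ∩ {l | (l : ℕ) < k}))) := by
  have hk1 : 1 ≤ (k : ℕ) := Nat.one_le_iff_ne_zero.2 (Fin.val_ne_zero_iff.2 hk0)
  set k' : Fin n := ⟨k - 1, by omega⟩
  have hkk' : (k : ℕ) = k' + 1 := by simp [k']; omega
  obtain ⟨p, hp, hpk, hk'⟩ : ∃ p : ℝ, (k' : ℝ) ≤ p ∧ p ≤ q k ∧
      snap v Y (trailing q ∩ {l | (l : ℕ) < k}) k' = boundaryPath v p := by
    by_cases hk' : k' ∈ trailing q
    · refine ⟨k', le_rfl, ?_, ?_⟩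
      · have := hC k; rw [hkk'] at this; push_cast at this; linarith
      · rw [snap_of_mem (show k' ∈ trailing q ∩ _ from ⟨hk', by simp [k']; omega⟩),
          boundaryPath_natCast]
    · refine ⟨q k', (not_le.1 hk').le, h.mono (Fin.le_def.2 (by omega)), ?_⟩
      rw [snap_of_notMem fun hk'M => hk' hk'M.1, h.eq]
  refine pushOut_snap_insert (j := k') (fun hkM => lt_irrefl (k : ℕ) hkM.2)
    (fun hk'k => by rw [Fin.ext_iff] at hk'k; omega) ?_
  have hqk : q k ≤ (k' : ℝ) + 1 := by
    have : q k ≤ k := hk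
    rw [hkk'] at this; exact_mod_cast this
  rw [h.eq, hk']
  simpa [← hkk'] using boundaryPath_mem_segment v k' hp hpk hqk

/-- A vertex `k` that is not trailing lies on the edge `[v k, v (k+1)]`; it is pushed onto `v k`
away from vertex `k + 1`, which already sits on `v (k+1)` (for `k = n - 1` this is vertex `0`,
on `v 0 = v n`). -/
theorem pushOut_snap_insert_leading (hv : Function.Periodic v n) (hC : ∀ k : Fin n, q k ≤ k + 1)
    {k : Fin n} (hk : k ∉ trailing q) {j : ℕ} (hkj : (k : ℕ) + j + 1 = n) :
    PushOut (snap v Y (trailing q ∪ {l | n ≤ (l : ℕ) + j}))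
      (snap v Y (insert k (trailing q ∪ {l | n ≤ (l : ℕ) + j}))) := by
  have hkM : k ∉ trailing q ∪ {l | n ≤ (l : ℕ) + j} := by
    rintro (hk' | hk')
    · exact hk hk'
    · have : n ≤ (k : ℕ) + j := hk'
      omega
  set k' : Fin n := ((k + 1 : ℕ) : Fin n)
  have hk'val : (k' : ℕ) = ((k : ℕ) + 1) % n := Fin.val_natCast _ _
  have hk'M : k' ∈ trailing q ∪ {l | n ≤ (l : ℕ) + j} := by
    rcases Nat.lt_or_ge ((k : ℕ) + 1) n with hlt | hge
    · exact Or.inr (show n ≤ (k' : ℕ) + j by rw [hk'val, Nat.mod_eq_of_lt hlt]; omega)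
    · have : k' = 0 := Fin.ext (by rw [hk'val, show (k : ℕ) + 1 = n by omega]; simp)
      exact Or.inl (this ▸ by simp [trailing, h.zero])
  refine pushOut_snap_insert (j := k') hkM (fun hk'k => hkM (hk'k ▸ hk'M)) ?_
  have hqk : (k : ℝ) ≤ q k := (not_le.1 hk).le
  rw [snap_of_mem hk'M, show v k' = v (k + 1) from hv.map_mod_nat _, h.eq, segment_symm]
  simpa using boundaryPath_mem_segment v k le_rfl hqk (hC k)

theorem exists_moveChain_snap_trailing (hC : ∀ k : Fin n, (k : ℝ) ≤ q k + 1) :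
    ∃ m ≤ #{k : Fin n | k ≠ 0 ∧ q k ≤ k}, MoveChain PushOut m Y (snap v Y (trailing q)) := by
  let M : ℕ → Set (Fin n) := fun j => trailing q ∩ {l | (l : ℕ) < j}
  obtain ⟨m, hm, hchain⟩ := MoveChain.exists_of_steps (Rel := PushOut) (fun j => snap v Y (M j))
    (({k | k ≠ 0 ∧ q k ≤ k} : Finset (Fin n)).image Fin.val) n fun j hj => by
      obtain ⟨k, rfl⟩ : ∃ k : Fin n, (k : ℕ) = j := ⟨⟨j, hj⟩, rfl⟩
      by_cases hk : k ∈ trailing q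
      · have hMk : M (k + 1) = insert k (M k) := by
          simp only [trailing, Set.mem_ofPred_eq] at hk
          ext l
          simp only [M, trailing, Set.mem_inter_iff, Set.mem_ofPred_eq, Set.mem_insert_iff,
            Fin.ext_iff]
          grind
        rw [hMk]
        rcases eq_or_ne k 0 with rfl | hk0
        · exact Or.inl (snap_insert_of_eq h.eq_zero)
        · exact Or.inr ⟨mem_image_of_mem _ (mem_filter.2 ⟨mem_univ _, hk0, hk⟩),
            h.pushOut_snap_insert_trailing hC hk hk0⟩
      · left
        simp only [trailing, Set.mem_ofPred_eq] at hk
        congr 1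
        ext l
        simp only [M, trailing, Set.mem_inter_iff, Set.mem_ofPred_eq]
        grind
  refine ⟨m, hm.trans ((card_filter_le _ _).trans card_image_le), ?_⟩
  have hM0 : M 0 = ∅ := by ext; simp [M]
  have hMn : M n = trailing q := by ext l; simp [M]
  simp only [hM0, hMn] at hchain
  simpa [snap] using hchain

theorem exists_moveChain_snap_univ (hv : Function.Periodic v n) (hC : ∀ k : Fin n, q k ≤ k + 1) :
    ∃ m ≤ #{k : Fin n | ¬ q k ≤ k},
      MoveChain PushOut m (snap v Y (trailing q)) (snap v Y Set.univ) := by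
  let M : ℕ → Set (Fin n) := fun j => trailing q ∪ {l | n ≤ (l : ℕ) + j}
  obtain ⟨m, hm, hchain⟩ := MoveChain.exists_of_steps (Rel := PushOut) (fun j => snap v Y (M j))
    (({k | ¬ q k ≤ k} : Finset (Fin n)).image fun k : Fin n => n - 1 - (k : ℕ)) n fun j hj => by
      obtain ⟨k, hkj⟩ : ∃ k : Fin n, (k : ℕ) + j + 1 = n := ⟨⟨n - 1 - j, by omega⟩, by simp; omega⟩
      have hMk : M (j + 1) = insert k (M j) := by
        ext l
        simp only [M, Set.mem_union, Set.mem_ofPred_eq, Set.mem_insert_iff, Fin.ext_iff]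
        grind
      rw [hMk]
      by_cases hk : k ∈ trailing q
      · exact Or.inl (by rw [Set.insert_eq_of_mem (show k ∈ M j from Or.inl hk)])
      · exact Or.inr ⟨mem_image.2 ⟨k, mem_filter.2 ⟨mem_univ _, hk⟩, by omega⟩,
          h.pushOut_snap_insert_leading hv hC hk hkj⟩
  refine ⟨m, hm.trans ((card_filter_le _ _).trans card_image_le), ?_⟩
  have hM0 : M 0 = trailing q := by ext l; simp [M]
  have hMn : M n = Set.univ := by ext l; simp [M]
  simpa only [hM0, hMn] using hchain

theorem exists_moveChain (hv : Function.Periodic v n) (hC₁ : ∀ k : Fin n, (k : ℝ) ≤ q k + 1)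
    (hC₂ : ∀ k : Fin n, q k ≤ k + 1) :
    ∃ m ≤ n - 1, MoveChain PushOut m Y fun k => v k := by
  obtain ⟨m₁, hm₁, h₁⟩ := h.exists_moveChain_snap_trailing hC₁
  obtain ⟨m₂, hm₂, h₂⟩ := h.exists_moveChain_snap_univ hv hC₂
  refine ⟨m₁ + m₂, ?_, by simpa [snap] using h₁.trans h₂⟩
  have hsplit := card_filter_add_card_filter_not (s := univ.erase (0 : Fin n)) (fun k => q k ≤ k)
  rw [card_erase_of_mem (mem_univ _), card_fin] at hsplit
  have htrail :
      ({k | k ≠ 0 ∧ q k ≤ k} : Finset (Fin n)) = (univ.erase 0).filter fun k => q k ≤ k := by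
    ext k; simp
  have hlead : ({k | ¬ q k ≤ k} : Finset (Fin n)) = (univ.erase 0).filter fun k => ¬ q k ≤ k := by
    ext k
    simp only [mem_filter, mem_univ, mem_erase, and_true, true_and]
    refine ⟨fun hk => ⟨?_, hk⟩, And.right⟩
    rintro rfl
    exact hk (by simp [h.zero])
  rw [htrail] at hm₁
  rw [hlead] at hm₂
  omega

end SortedPositions

section Polygon

theorem vertex_mem_hull {n : ℕ} (P : Fin n → Pt) (i : Fin n) : P i ∈ hull P :=
  subset_convexHull ℝ _ ⟨i, rfl⟩

theorem hull_comp_perm {n : ℕ} (P : Fin n → Pt) (σ : Equiv.Perm (Fin n)) :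
    hull (P ∘ σ) = hull P := by
  rw [hull, hull, σ.surjective.range_comp]

variable {n : ℕ} [NeZero n]

theorem periodic_vertex (P : Fin n → Pt) (j : Fin n) :
    Function.Periodic (fun d : ℕ => P (j + d)) n := by
  intro d; simp

theorem range_vertex (P : Fin n → Pt) (j : Fin n) :
    Set.range (fun k : Fin n => P (j + ((k : ℕ) : Fin n))) = Set.range P := by
  ext x
  constructor
  · rintro ⟨k, rfl⟩; exact ⟨_, rfl⟩
  · rintro ⟨i, rfl⟩; exact ⟨i - j, by simp⟩

theorem exists_boundaryPath_eq {P : Fin n → Pt} {x : Pt} (hx : x ∈ bdry P) (j : Fin n) :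
    ∃ p ∈ Set.Icc (0 : ℝ) n, x = boundaryPath (fun d : ℕ => P (j + d)) p := by
  obtain ⟨c, hc⟩ := Set.mem_iUnion.1 hx
  set d : ℕ := ((c - j : Fin n) : ℕ)
  have hd : (d : ℝ) + 1 ≤ n := by exact_mod_cast (c - j).isLt
  have hvd : P (j + d) = P c := by simp [d]
  have hvd' : P (j + (d + 1 : ℕ)) = P (c + 1) := by simp [d]; ring_nf
  rw [segment_eq_image_lineMap] at hc
  obtain ⟨t, ⟨ht0, ht1⟩, rfl⟩ := hc
  refine ⟨d + t, ⟨by positivity, by linarith⟩, ?_⟩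
  rw [boundaryPath_eq_lineMap _ d (by linarith) (by linarith), hvd, hvd', add_sub_cancel_left]

theorem exists_sortedPositions {P P' : Fin n → Pt} (hins : ∀ i, P' i ∈ bdry P) {i₀ j₀ : Fin n}
    (hi₀ : P' i₀ = P j₀) :
    ∃ σ : Equiv.Perm (Fin n), ∃ q, SortedPositions (fun d : ℕ => P (j₀ + d)) (P' ∘ σ) q := by
  choose pos hpos hPpos using fun i => exists_boundaryPath_eq (hins i) j₀
  let pos' := Function.update pos i₀ 0
  have hpos'0 : ∀ i, 0 ≤ pos' i := by
    intro i; by_cases hi : i = i₀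
    · simp [pos', hi]
    · simp [pos', hi, (hpos i).1]
  refine ⟨Tuple.sort pos', pos' ∘ Tuple.sort pos', ⟨Tuple.monotone_sort pos', ?_, fun k => ?_,
    fun k => ?_⟩⟩
  · refine le_antisymm ?_ (hpos'0 _)
    calc pos' (Tuple.sort pos' 0) ≤ pos' (Tuple.sort pos' ((Tuple.sort pos').symm i₀)) :=
          Tuple.monotone_sort pos' (Fin.zero_le _)
      _ = 0 := by simp [pos']
  · by_cases hk : Tuple.sort pos' k = i₀
    · simp [pos', hk]
    · simp [pos', hk, (hpos _).2]
  · by_cases hk : Tuple.sort pos' k = i₀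
    · simp only [Function.comp_apply, hk, pos', Function.update_self, hi₀]
      simpa using (boundaryPath_natCast (fun d : ℕ => P (j₀ + d)) 0).symm
    · simpa [pos', hk] using hPpos _

end Polygon

theorem statement6_general (n : ℕ) [NeZero n] (P P' : Fin n → Pt)
    (hins : ∀ i, P' i ∈ bdry P)
    (hnd : ¬ DegenIn P' P)
    (hocc : ∃ i j : Fin n, P' i = P j) :
    ∃ k : ℕ, k ≤ n - 1 ∧ ∃ P'' : Fin n → Pt,
      Set.range P'' = Set.range P ∧ MoveChain PushOut k P' P'' := by
  obtain ⟨i₀, j₀, hi₀⟩ := hocc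
  obtain ⟨σ, q, hq⟩ := exists_sortedPositions hins hi₀
  have hvP : ∀ d : ℕ, P (j₀ + d) ∈ hull P := fun d => vertex_mem_hull P _
  have hnd' : ¬ DegenIn (P' ∘ σ) P := by
    rintro ⟨m, hm, Q, hQ, hQP⟩
    exact hnd ⟨m, hm, Q, hull_comp_perm P' σ ▸ hQ, hQP⟩
  obtain ⟨m, hm, hchain⟩ := hq.exists_moveChain (periodic_vertex P j₀)
    (hq.coe_le_add_one hvP hnd') (hq.le_coe_add_one (periodic_vertex P j₀) hvP hnd')
  refine ⟨m, hm, (fun k : Fin n => P (j₀ + ((k : ℕ) : Fin n))) ∘ σ.symm,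
    by rw [σ.symm.surjective.range_comp, range_vertex], ?_⟩
  have := hchain.map (· ∘ σ.symm) fun A B hAB => hAB.comp_perm σ.symm
  rwa [Function.comp_assoc, Equiv.self_comp_symm, Function.comp_id] at this

/-- Let `P` be a convex `n`-gon and `P'` an `n`-gon inscribed in `P`,
non-degenerate in `P`, with at least one vertex of `P'` occupying a vertex of `P`.
Then at most `n-1` push-out moves transform `P'` into an `n`-gon whose set of
vertices is exactly the set of vertices of `P`. -/
theorem statement6 (n : ℕ) (hn : 3 ≤ n) [NeZero n] (P P' : Fin n → Pt) (hP : CCW P)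
    (hins : ∀ i, P' i ∈ bdry P)
    (hsub : hull P' ⊆ hull P) (hnd : ¬ DegenIn P' P)
    (hocc : ∃ i j : Fin n, P' i = P j) :
    ∃ k : ℕ, k ≤ n - 1 ∧ ∃ P'' : Fin n → Pt,
      Set.range P'' = Set.range P ∧ MoveChain PushOut k P' P'' :=
  statement6_general n P P' hins hnd hocc

end
end

section
/- Let P = (p_1,…,p_n) and P' = (p_1',…,p_n') be n-gons such that every vertex of P' equals some vertex of P, and such that P has a double point (there exist indices i ≠ j with p_i = p_j). Then there is a sequence of at most 3n/2 push-out moves transforming P' into P (i.e., ending at the n-gon whose i-th vertex is p_i for every i). -/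
noncomputable section

/-!
Read backwards, a push-out move is a pull-in, and copying the value of vertex `j` into vertex `i`
is a pull-in (take `q = p_j`). So it suffices to turn `P` into `P'` by at most `3n/2` copies.
Since `P'` takes its values among those of `P`, which has a double point, `P'` has a double point
`P' x₀ = P' y₀` (pigeonhole); `x₀` serves as a scratch vertex, fixed at the very end by copying
from `y₀`.

Let `D` be the set of misplaced vertices other than `x₀`. A vertex of `D` that is overwritable
(its value is not needed by `P'`, or is also stored elsewhere) is fixed by one copy. If there is
none, the target permutes the values on `D` cyclically and `x₀` is overwritable; parking one value
of a cycle in `x₀` costs one extra copy per cycle, and cycles have length at least two. The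
potential `3|D| + 1 + [x₀ overwritable]` bounds twice the number of copies.
-/

open Function Set Finset

theorem MoveChain.refl_s7 {n : ℕ} (R : (Fin n → Pt) → (Fin n → Pt) → Prop) (P : Fin n → Pt) :
    MoveChain R 0 P P :=
  ⟨fun _ => P, rfl, rfl, fun s => s.elim0⟩

theorem MoveChain.snoc {n m : ℕ} {R : (Fin n → Pt) → (Fin n → Pt) → Prop} {A B C : Fin n → Pt}
    (h : MoveChain R m A B) (hR : R B C) : MoveChain R (m + 1) A C := by
  obtain ⟨F, hF0, hFm, hF⟩ := h
  refine ⟨Fin.snoc F C, ?_, Fin.snoc_last _ _, fun s => ?_⟩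
  · rw [← Fin.castSucc_zero, Fin.snoc_castSucc, hF0]
  · induction s using Fin.lastCases with
    | last =>
      rw [Fin.snoc_castSucc, Fin.succ_last, Fin.snoc_last, hFm]
      exact hR
    | cast t =>
      rw [Fin.snoc_castSucc, Fin.succ_castSucc, Fin.snoc_castSucc]
      exact hF t

theorem pushOut_update_copy {n : ℕ} (C : Fin n → Pt) {i j : Fin n} (hij : i ≠ j) :
    PushOut (update C i (C j)) C := by
  refine ⟨i, j, hij, ?_, fun k hk => (update_of_ne hk _ _).symm⟩
  rw [update_self, update_of_ne hij.symm]
  exact left_mem_segment ℝ _ _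

open Classical in
def misplaced {n : ℕ} (T : Fin n → Pt) (x₀ : Fin n) (C : Fin n → Pt) : Finset (Fin n) :=
  univ.filter fun i => i ≠ x₀ ∧ C i ≠ T i

def Overwritable {n : ℕ} (T C : Fin n → Pt) (i : Fin n) : Prop :=
  C i ∈ range T → ∃ j ≠ i, C j = C i

section CopyMoves

variable {n : ℕ} {T C : Fin n → Pt} {x₀ : Fin n}

theorem mem_misplaced {i : Fin n} : i ∈ misplaced T x₀ C ↔ i ≠ x₀ ∧ C i ≠ T i := by
  simp [misplaced]

theorem not_overwritable_iff {i : Fin n} :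
    ¬ Overwritable T C i ↔ C i ∈ range T ∧ ∀ j ≠ i, C j ≠ C i := by
  simp [Overwritable]

theorem misplaced_update_apply_self (i : Fin n) :
    misplaced T x₀ (update C i (T i)) = (misplaced T x₀ C).erase i := by
  ext k
  by_cases hk : k = i
  · subst hk; simp [mem_misplaced]
  · simp [mem_misplaced, hk]

theorem misplaced_update_scratch (v : Pt) :
    misplaced T x₀ (update C x₀ v) = misplaced T x₀ C := by
  ext k
  by_cases hk : k = x₀
  · simp [mem_misplaced, hk]
  · simp [mem_misplaced, update_of_ne hk]

theorem range_subset_range_update {i : Fin n} (hi : Overwritable T C i) (h : range T ⊆ range C)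
    (v : Pt) : range T ⊆ range (update C i v) := by
  rintro _ ⟨m, rfl⟩
  obtain ⟨j, hj⟩ := h ⟨m, rfl⟩
  by_cases hji : j = i
  · subst hji
    obtain ⟨j', hj'j, hj'⟩ := hi ⟨m, hj.symm⟩
    exact ⟨j', by rw [update_of_ne hj'j, hj', hj]⟩
  · exact ⟨j, by rw [update_of_ne hji, hj]⟩

theorem pushOut_update_of_range_subset (h : range T ⊆ range C) {i : Fin n} (hi : C i ≠ T i) :
    PushOut (update C i (T i)) C := by
  obtain ⟨j, hj⟩ := h ⟨i, rfl⟩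
  rw [← hj]
  exact pushOut_update_copy C fun hij => hi (hij ▸ hj)

theorem overwritable_of_forall_misplaced {y₀ : Fin n} (hxy : x₀ ≠ y₀) (hT : T x₀ = T y₀)
    (hD : ∀ i ∈ misplaced T x₀ C, ¬ Overwritable T C i) :
    Overwritable T C x₀ := by
  classical
  by_contra hx
  set A := insert x₀ (misplaced T x₀ C)
  have hstuck : ∀ a ∈ A, C a ∈ range T ∧ ∀ j ≠ a, C j ≠ C a := by
    intro a ha
    rcases Finset.mem_insert.mp ha with rfl | ha
    exacts [not_overwritable_iff.mp hx, not_overwritable_iff.mp (hD a ha)]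
  have hcorrect : ∀ j ∉ A, C j = T j := by
    intro j hj
    by_contra hne
    exact hj (mem_insert_of_mem (mem_misplaced.mpr ⟨fun h => hj (h ▸ mem_insert_self _ _), hne⟩))
  -- `C` is injective on `A` and every value `C a` is needed somewhere in `A`, so `T` maps `A`
  -- bijectively onto `C '' A`; then `T x₀ = T y₀` leaves no room for `y₀`.
  have hCinj : Set.InjOn C A := fun a ha b _ hab => by
    by_contra hne
    exact (hstuck a ha).2 b (Ne.symm hne) hab.symm
  have hsub : A.image C ⊆ A.image T := by
    intro _ h
    obtain ⟨a, ha, rfl⟩ := Finset.mem_image.mp h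
    obtain ⟨⟨m, hm⟩, huniq⟩ := hstuck a ha
    refine Finset.mem_image.mpr ⟨m, ?_, hm⟩
    by_contra hmA
    exact huniq m (fun hma => hmA (hma ▸ ha)) (by rw [hcorrect m hmA, hm])
  have hcardC : (A.image C).card = A.card := card_image_of_injOn hCinj
  have himage : A.image C = A.image T :=
    eq_of_subset_of_card_le hsub (hcardC ▸ card_image_le)
  have hTinj : Set.InjOn T A := card_image_iff.mp (le_antisymm card_image_le (himage ▸ hcardC.ge))
  obtain ⟨a, ha, hCa⟩ : ∃ a ∈ A, C a = T x₀ :=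
    Finset.mem_image.mp (himage ▸ Finset.mem_image_of_mem T (mem_insert_self x₀ _))
  by_cases hy : y₀ ∈ A
  · exact hxy (hTinj (mem_insert_self _ _) hy hT)
  · exact (hstuck a ha).2 y₀ (fun h => hy (h ▸ ha)) (by rw [hcorrect y₀ hy, ← hT, hCa])

theorem not_overwritable_update_update {i : Fin n} (hix : i ≠ x₀) (hi : ¬ Overwritable T C i)
    (hiT : C i ≠ T i) : ¬ Overwritable T (update (update C x₀ (C i)) i (T i)) x₀ := by
  obtain ⟨hiT', huniq⟩ := not_overwritable_iff.mp hi
  have hx : update (update C x₀ (C i)) i (T i) x₀ = C i := by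
    rw [update_of_ne hix.symm, update_self]
  intro hw
  obtain ⟨j, hjx, hj⟩ := hw (by rwa [hx])
  rw [hx] at hj
  by_cases hji : j = i
  · subst hji
    exact hiT (by rw [← hj, update_self])
  · exact huniq j hji (by rwa [update_of_ne hji, update_of_ne hjx] at hj)

theorem exists_moveChain_pushOut_of_misplaced_eq_empty (hC : range T ⊆ range C)
    (hempty : misplaced T x₀ C = ∅) : ∃ k ≤ 1, MoveChain PushOut k T C := by
  have hcorrect : ∀ j ≠ x₀, C j = T j := fun j hj => by
    by_contra hne
    simpa [hempty] using mem_misplaced.mpr ⟨hj, hne⟩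
  by_cases hCx : C x₀ = T x₀
  · have hCT : C = T := funext fun j => by
      by_cases hj : j = x₀
      exacts [hj ▸ hCx, hcorrect j hj]
    exact ⟨0, zero_le_one, hCT ▸ MoveChain.refl_s7 _ _⟩
  · have hTC : update C x₀ (T x₀) = T := by
      ext1 j
      by_cases hj : j = x₀
      · subst hj; exact update_self ..
      · rw [update_of_ne hj, hcorrect j hj]
    exact ⟨1, le_rfl,
      (MoveChain.refl_s7 PushOut T).snoc (hTC ▸ pushOut_update_of_range_subset hC hCx)⟩

open Classical in
theorem exists_moveChain_pushOut {y₀ : Fin n} (hxy : x₀ ≠ y₀) (hT : T x₀ = T y₀)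
    (C : Fin n → Pt) (hC : range T ⊆ range C) :
    ∃ k, MoveChain PushOut k T C ∧
      2 * k + (if Overwritable T C x₀ then 0 else 1) ≤ 3 * (misplaced T x₀ C).card + 2 := by
  induction hd : (misplaced T x₀ C).card using Nat.strong_induction_on generalizing C with
  | _ d ih =>
  by_cases hsafe : ∃ i ∈ misplaced T x₀ C, Overwritable T C i
  · obtain ⟨i, hi, hiw⟩ := hsafe
    have hdpos : 0 < d := hd ▸ card_pos.mpr ⟨i, hi⟩
    have hcard : (misplaced T x₀ (update C i (T i))).card = d - 1 := by
      rw [misplaced_update_apply_self, card_erase_of_mem hi, hd]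
    obtain ⟨k, hk, hbound⟩ := ih _ (by omega) _ (range_subset_range_update hiw hC _) hcard
    refine ⟨k + 1, hk.snoc (pushOut_update_of_range_subset hC (mem_misplaced.mp hi).2), ?_⟩
    split_ifs at hbound ⊢ <;> omega
  push Not at hsafe
  have hx := overwritable_of_forall_misplaced hxy hT hsafe
  rw [if_pos hx]
  obtain hempty | ⟨i, hi⟩ := (misplaced T x₀ C).eq_empty_or_nonempty
  · obtain ⟨k, hk1, hk⟩ := exists_moveChain_pushOut_of_misplaced_eq_empty hC hempty
    exact ⟨k, hk, by omega⟩
  -- park the value of `i` in the scratch vertex `x₀`, then fix `i`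
  obtain ⟨hix, hiT⟩ := mem_misplaced.mp hi
  have hdpos : 0 < d := hd ▸ card_pos.mpr ⟨i, hi⟩
  set C₁ := update C x₀ (C i)
  have hC₁ : range T ⊆ range C₁ := range_subset_range_update hx hC _
  have hC₁i : C₁ i = C i := update_of_ne hix _ _
  have hC₁w : Overwritable T C₁ i := fun _ => ⟨x₀, hix.symm, by rw [hC₁i]; exact update_self ..⟩
  have hcard : (misplaced T x₀ (update C₁ i (T i))).card = d - 1 := by
    rw [misplaced_update_apply_self, misplaced_update_scratch, card_erase_of_mem hi, hd]
  obtain ⟨k, hk, hbound⟩ := ih _ (by omega) _ (range_subset_range_update hC₁w hC₁ _) hcard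
  refine ⟨k + 2, (hk.snoc (pushOut_update_of_range_subset hC₁ (hC₁i ▸ hiT))).snoc
    (pushOut_update_copy C hix.symm), ?_⟩
  rw [if_neg (not_overwritable_update_update hix (hsafe i hi) hiT)] at hbound
  omega

end CopyMoves

theorem Function.Injective.of_range_subset_range {ι α : Type*} [Finite ι] {f g : ι → α}
    (hf : Injective f) (h : range f ⊆ range g) : Injective g := by
  choose σ hσ using fun i => h ⟨i, rfl⟩
  have hσinj : Injective σ := fun i j hij => hf (by rw [← hσ i, ← hσ j, hij])
  intro a b hab
  obtain ⟨a, rfl⟩ := (Finite.injective_iff_surjective.mp hσinj) a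
  obtain ⟨b, rfl⟩ := (Finite.injective_iff_surjective.mp hσinj) b
  rw [hσinj.eq_iff]
  exact hf (by rw [← hσ a, ← hσ b, hab])

theorem statement7_general (n : ℕ) (P P' : Fin n → Pt)
    (hocc : ∀ i : Fin n, ∃ j : Fin n, P' i = P j)
    (hdp : ∃ i j : Fin n, i ≠ j ∧ P i = P j) :
    ∃ k : ℕ, 2 * k ≤ 3 * n ∧ MoveChain PushOut k P' P := by
  have hrange : range P' ⊆ range P := by
    rintro _ ⟨i, rfl⟩
    obtain ⟨j, hj⟩ := hocc i
    exact ⟨j, hj.symm⟩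
  have hP' : ¬ Injective P' := fun h => by
    obtain ⟨i, j, hij, hP⟩ := hdp
    exact hij (h.of_range_subset_range hrange hP)
  obtain ⟨x₀, y₀, hT, hxy⟩ := not_injective_iff.mp hP'
  obtain ⟨k, hk, hbound⟩ := exists_moveChain_pushOut hxy hT P hrange
  have hcard : (misplaced P' x₀ P).card ≤ n - 1 := by
    simpa using Finset.card_le_card fun i hi => mem_erase.mpr ⟨(mem_misplaced.mp hi).1, mem_univ i⟩
  refine ⟨k, ?_, hk⟩
  have := x₀.isLt
  split_ifs at hbound <;> omega

/-- If every vertex of `P'` occupies a vertex of `P`, and `P` has a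
double point, then one can go from `P'` to `P` in at most `3n/2` push-out moves. -/
theorem statement7 (n : ℕ) (hn : 3 ≤ n) (P P' : Fin n → Pt)
    (hocc : ∀ i : Fin n, ∃ j : Fin n, P' i = P j)
    (hdp : ∃ i j : Fin n, i ≠ j ∧ P i = P j) :
    ∃ k : ℕ, 2 * k ≤ 3 * n ∧ MoveChain PushOut k P' P :=
  statement7_general n P P' hocc hdp

end
end

section
/- Let P be a convex n-gon oriented counterclockwise. For every m-gon Q with co(Q) ⊆ co(P) and m < n, there exists an (n−1)-gon Q' that is maximal degenerate in P and satisfies co(Q) ⊆ co(Q') ⊆ co(P). -/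
/-!
Radially projecting the vertices of `Q` from one of them, `q`, onto `∂P`, and pushing `q` itself
outward along a chord, gives at most `max m 2 ≤ n - 1` points of `∂P` whose hull contains
`co(Q)`. Replacing all chosen points on one edge of `P` by the two endpoints of that edge, or
adding a missing vertex of `P`, never shrinks the hull. Among all such point sets take one with
the fewest points that are not vertices of `P` and, subject to that, as many points as possible:
each move would improve it, so it has exactly `n - 1` points and every non-vertex point is alone
on its edge, i.e. it is a maximal degenerate polygon.
-/

noncomputable section

lemma Fin.add_one_ne_self {n : ℕ} [NeZero n] (hn : 2 ≤ n) (i : Fin n) : i + 1 ≠ i := by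
  intro h
  have := congrArg Fin.val (add_eq_left.mp h)
  rw [Fin.val_one', Fin.val_zero, Nat.one_mod_eq_zero_iff] at this
  omega

lemma Fin.add_one_add_one_ne_self {n : ℕ} [NeZero n] (hn : 3 ≤ n) (i : Fin n) :
    i + 1 + 1 ≠ i := by
  intro h
  have := congrArg Fin.val (add_eq_left.mp ((add_assoc _ _ _).symm.trans h))
  rw [Fin.val_add, Fin.val_one', Nat.one_mod_eq_one.mpr (by omega), Fin.val_zero,
    Nat.mod_eq_of_lt (by omega)] at this
  omega

lemma Fin.sum_apply_add_one_sub_eq_zero {G : Type*} [AddCommGroup G] {n : ℕ} [NeZero n]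
    (f : Fin n → G) : ∑ j, (f (j + 1) - f j) = 0 := by
  rw [Finset.sum_sub_distrib, sub_eq_zero]
  exact Equiv.sum_comp (Equiv.addRight 1) f

lemma Finset.card_insert_insert_filter_not_add_card_filter_le {α : Type*} [DecidableEq α]
    (W : Finset α) (a b : α) (p : α → Prop) [DecidablePred p] :
    (insert a (insert b (W.filter (¬ p ·)))).card + (W.filter p).card ≤ W.card + 2 := by
  have h1 := Finset.card_insert_le a (insert b (W.filter (¬ p ·)))
  have h2 := Finset.card_insert_le b (W.filter (¬ p ·))
  have h3 := Finset.card_filter_add_card_filter_not (s := W) p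
  omega

lemma Finset.exists_injective_range_eq {α : Type*} (W : Finset α) {k : ℕ} (h : W.card = k) :
    ∃ f : Fin k → α, Function.Injective f ∧ Set.range f = ↑W := by
  refine ⟨fun i => (W.equivFinOfCardEq h).symm i, fun i j hij => ?_, ?_⟩
  · exact (W.equivFinOfCardEq h).symm.injective (Subtype.ext hij)
  · rw [Set.range_comp' Subtype.val, (W.equivFinOfCardEq h).symm.surjective.range_eq]
    simp

lemma convexHull_subset_convexHull_replace_segment {E : Type*} [AddCommGroup E] [Module ℝ E]
    [DecidableEq E] (W : Finset E) (a b : E) [DecidablePred (· ∈ segment ℝ a b)] :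
    convexHull ℝ (W : Set E) ⊆
      convexHull ℝ ((insert a (insert b (W.filter (· ∉ segment ℝ a b))) : Finset E) : Set E) := by
  have hconv := convex_convexHull ℝ
    ((insert a (insert b (W.filter (· ∉ segment ℝ a b))) : Finset E) : Set E)
  refine convexHull_min (fun x hx => ?_) hconv
  by_cases hxs : x ∈ segment ℝ a b
  · exact hconv.segment_subset (subset_convexHull ℝ _ (by simp))
      (subset_convexHull ℝ _ (by simp)) hxs
  · exact subset_convexHull ℝ _ (by simp [Finset.mem_coe.mp hx, hxs])

lemma Pt.ext {x y : Pt} (h0 : x 0 = y 0) (h1 : x 1 = y 1) : x = y := by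
  ext i
  fin_cases i
  exacts [h0, h1]

def perpDot : Pt →ₗ[ℝ] Pt →ₗ[ℝ] ℝ :=
  LinearMap.mk₂ ℝ (fun u v => u 0 * v 1 - u 1 * v 0)
    (fun _ _ _ => by simp only [PiLp.add_apply]; ring)
    (fun _ _ _ => by simp only [PiLp.smul_apply, smul_eq_mul]; ring)
    (fun _ _ _ => by simp only [PiLp.add_apply]; ring)
    (fun _ _ _ => by simp only [PiLp.smul_apply, smul_eq_mul]; ring)

lemma perpDot_apply (u v : Pt) : perpDot u v = u 0 * v 1 - u 1 * v 0 := rfl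

lemma perpDot_self (u : Pt) : perpDot u u = 0 := by rw [perpDot_apply]; ring

lemma perpDot_eq_zero_of_perpDot_eq_zero {u v d : Pt} (hd : d ≠ 0) (hu : perpDot u d = 0)
    (hv : perpDot v d = 0) : perpDot u v = 0 := by
  rw [perpDot_apply] at *
  by_contra h
  refine hd (Pt.ext ?_ ?_)
  · exact (mul_eq_zero.mp (by linear_combination v 0 * hu - u 0 * hv :
      (u 0 * v 1 - u 1 * v 0) * d 0 = 0)).resolve_left h
  · exact (mul_eq_zero.mp (by linear_combination v 1 * hu - u 1 * hv :
      (u 0 * v 1 - u 1 * v 0) * d 1 = 0)).resolve_left h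

lemma exists_eq_smul_of_perpDot_eq_zero {u w : Pt} (hu : u ≠ 0) (h : perpDot u w = 0) :
    ∃ σ : ℝ, w = σ • u := by
  rw [perpDot_apply] at h
  have hsmul (σ : ℝ) (h0 : w 0 = σ * u 0) (h1 : w 1 = σ * u 1) : w = σ • u := Pt.ext h0 h1
  by_cases hu0 : u 0 = 0
  · have hu1 : u 1 ≠ 0 := fun hu1 => hu (Pt.ext hu0 hu1)
    refine ⟨w 1 / u 1, hsmul _ ?_ (by field_simp)⟩
    rw [hu0] at h ⊢
    field_simp
    linarith
  · exact ⟨w 0 / u 0, hsmul _ (by field_simp) (by field_simp; linarith)⟩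

lemma det3_eq_perpDot (a b c : Pt) : det3 a b c = perpDot (b - a) (c - a) := by
  simp only [det3, perpDot_apply, PiLp.sub_apply]

lemma det3_self_left (a b : Pt) : det3 a b a = 0 := by unfold det3; ring

lemma det3_self_right (a b : Pt) : det3 a b b = 0 := by unfold det3; ring

lemma det3_self_mid (a c : Pt) : det3 a a c = 0 := by unfold det3; ring

lemma det3_rotate (a b c : Pt) : det3 b c a = det3 a b c := by unfold det3; ring

lemma det3_add_smul (a b x d : Pt) (t : ℝ) :
    det3 a b (x + t • d) = det3 a b x + t * perpDot (b - a) d := by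
  simp only [det3, perpDot_apply, PiLp.add_apply, PiLp.sub_apply, PiLp.smul_apply, smul_eq_mul]
  ring

lemma det3_lineMap (a b x y : Pt) (t : ℝ) :
    det3 a b (AffineMap.lineMap x y t) = (1 - t) * det3 a b x + t * det3 a b y := by
  simp only [det3, AffineMap.lineMap_apply_module, PiLp.add_apply, PiLp.smul_apply, smul_eq_mul]
  ring

lemma exists_eq_lineMap_of_det3_eq_zero {a b x : Pt} (hab : a ≠ b) (h : det3 a b x = 0) :
    ∃ σ : ℝ, x = AffineMap.lineMap a b σ := by
  rw [det3_eq_perpDot] at h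
  obtain ⟨σ, hσ⟩ := exists_eq_smul_of_perpDot_eq_zero (sub_ne_zero.mpr hab.symm) h
  exact ⟨σ, by rw [AffineMap.lineMap_apply_module', ← hσ]; abel⟩

lemma convex_setOf_det3_nonneg (a b : Pt) : Convex ℝ {x | 0 ≤ det3 a b x} := by
  have : {x | 0 ≤ det3 a b x} = {x | perpDot (b - a) a ≤ perpDot (b - a) x} := by
    ext x
    rw [Set.mem_ofPred_eq, Set.mem_ofPred_eq, det3_eq_perpDot, map_sub, sub_nonneg]
  exact this ▸ convex_halfSpace_ge (perpDot (b - a)).isLinear _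

lemma bdry_subset_hull {n : ℕ} [NeZero n] (P : Fin n → Pt) : bdry P ⊆ hull P :=
  Set.iUnion_subset fun i => (convex_convexHull ℝ _).segment_subset
    (subset_convexHull ℝ _ ⟨i, rfl⟩) (subset_convexHull ℝ _ ⟨i + 1, rfl⟩)

namespace CCW

variable {n : ℕ} [NeZero n] {P : Fin n → Pt}

lemma det3_nonneg_of_mem_hull (hP : CCW P) (i : Fin n) {x : Pt} (hx : x ∈ hull P) :
    0 ≤ det3 (P i) (P (i + 1)) x := by
  refine convexHull_min ?_ (convex_setOf_det3_nonneg _ _) hx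
  rintro _ ⟨j, rfl⟩
  by_cases hji : j = i
  · simp [hji, det3_self_left]
  by_cases hji' : j = i + 1
  · simp [hji', det3_self_right]
  exact (hP i j hji hji').le

lemma det3_pos_succ (hn : 3 ≤ n) (hP : CCW P) (i : Fin n) :
    0 < det3 (P i) (P (i + 1)) (P (i + 1 + 1)) :=
  hP i _ (Fin.add_one_add_one_ne_self hn i) (Fin.add_one_ne_self (by omega) _)

lemma injective (hn : 3 ≤ n) (hP : CCW P) : Function.Injective P := by
  intro j k hjk
  by_contra hne
  by_cases hj : j = k + 1
  · have := hP.det3_pos_succ hn k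
    rw [← hj, hjk, det3_self_mid] at this
    exact this.false
  · have := hP k j hne hj
    rw [hjk, det3_self_left] at this
    exact this.false

lemma mem_edge_of_det3_eq_zero (hn : 3 ≤ n) (hP : CCW P) (i : Fin n) {x : Pt}
    (hx : ∀ j, 0 ≤ det3 (P j) (P (j + 1)) x) (hi : det3 (P i) (P (i + 1)) x = 0) :
    x ∈ segment ℝ (P i) (P (i + 1)) := by
  have hne : P i ≠ P (i + 1) := fun h => Fin.add_one_ne_self (by omega) i (hP.injective hn h).symm
  obtain ⟨σ, rfl⟩ := exists_eq_lineMap_of_det3_eq_zero hne hi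
  rw [segment_eq_image_lineMap]
  refine ⟨σ, ⟨?_, ?_⟩, rfl⟩
  · have hpos := hP.det3_pos_succ hn (i - 1)
    have hnonneg := hx (i - 1)
    rw [sub_add_cancel] at hpos hnonneg
    rw [det3_lineMap, det3_self_right] at hnonneg
    nlinarith
  · have hpos := hP.det3_pos_succ hn i
    have hnonneg := hx (i + 1)
    rw [det3_lineMap, det3_self_left, det3_rotate] at hnonneg
    nlinarith

/-- The ray in direction `d` leaves `P` through some edge: the edge vectors sum to zero and
are not all parallel to `d`. -/
lemma exists_perpDot_neg (hn : 3 ≤ n) (hP : CCW P) {d : Pt} (hd : d ≠ 0) :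
    ∃ j, perpDot (P (j + 1) - P j) d < 0 := by
  by_contra! h
  have hsum : ∑ j, perpDot (P (j + 1) - P j) d = 0 := by
    rw [← LinearMap.sum_apply, ← map_sum, Fin.sum_apply_add_one_sub_eq_zero, map_zero,
      LinearMap.zero_apply]
  have hzero := (Finset.sum_eq_zero_iff_of_nonneg fun j _ => h j).mp hsum
  have hpar := perpDot_eq_zero_of_perpDot_eq_zero hd (hzero 0 (Finset.mem_univ _))
    (hzero (0 + 1) (Finset.mem_univ _))
  have hpos := hP.det3_pos_succ hn 0
  rw [det3_eq_perpDot, show P (0 + 1 + 1) - P 0 = (P (0 + 1) - P 0) + (P (0 + 1 + 1) - P (0 + 1))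
    by abel, map_add, perpDot_self, hpar, add_zero] at hpos
  exact hpos.false

lemma exists_one_le_add_smul_mem_bdry (hn : 3 ≤ n) (hP : CCW P) {a y : Pt}
    (ha : a ∈ hull P) (hy : y ∈ hull P) (hya : y ≠ a) :
    ∃ T : ℝ, 1 ≤ T ∧ a + T • (y - a) ∈ bdry P := by
  set c : Fin n → ℝ := fun j => perpDot (P (j + 1) - P j) (y - a)
  obtain ⟨j₀, hj₀⟩ := hP.exists_perpDot_neg hn (sub_ne_zero.mpr hya)
  obtain ⟨i, hi, hmin⟩ := (Finset.univ.filter fun j => c j < 0).exists_min_image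
    (fun j => det3 (P j) (P (j + 1)) a / -c j)
    ⟨j₀, Finset.mem_filter.mpr ⟨Finset.mem_univ _, hj₀⟩⟩
  simp only [Finset.mem_filter, Finset.mem_univ, true_and] at hi hmin
  -- `i` is the first edge crossed by the ray `t ↦ a + t • (y - a)`, at the parameter below.
  have hdet (j : Fin n) (t : ℝ) :
      det3 (P j) (P (j + 1)) (a + t • (y - a)) = det3 (P j) (P (j + 1)) a + t * c j :=
    det3_add_smul _ _ _ _ _
  have hT : 1 ≤ det3 (P i) (P (i + 1)) a / -c i := by
    have := hP.det3_nonneg_of_mem_hull i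
      (show a + (1 : ℝ) • (y - a) ∈ hull P by simpa using hy)
    rw [hdet, one_mul] at this
    rw [le_div_iff₀ (neg_pos.mpr hi)]
    linarith
  refine ⟨_, hT, Set.mem_iUnion.mpr ⟨i, hP.mem_edge_of_det3_eq_zero hn i (fun j => ?_) ?_⟩⟩
  · rw [hdet]
    rcases lt_or_ge (c j) 0 with hj | hj
    · have := (le_div_iff₀ (neg_pos.mpr hj)).mp (hmin j hj)
      linarith
    · have := hP.det3_nonneg_of_mem_hull j ha
      exact add_nonneg this (mul_nonneg (by linarith) hj)
  · rw [hdet, div_mul_eq_mul_div, div_neg, mul_div_assoc, div_self hi.ne, mul_one]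
    ring

lemma exists_mem_bdry_mem_segment (hn : 3 ≤ n) (hP : CCW P) {x y : Pt} (hx : x ∈ hull P)
    (hy : y ∈ hull P) : ∃ w ∈ bdry P, y ∈ segment ℝ x w := by
  obtain rfl | hyx := eq_or_ne y x
  · exact ⟨P 0, Set.mem_iUnion.mpr ⟨0, left_mem_segment ℝ _ _⟩, left_mem_segment ℝ _ _⟩
  obtain ⟨T, hT, hw⟩ := hP.exists_one_le_add_smul_mem_bdry hn hx hy hyx
  refine ⟨_, hw, ?_⟩
  rw [segment_eq_image_lineMap]
  refine ⟨T⁻¹, ⟨by positivity, inv_le_one_of_one_le₀ hT⟩, ?_⟩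
  rw [AffineMap.lineMap_apply_module', add_sub_cancel_left, smul_smul,
    inv_mul_cancel₀ (by positivity), one_smul, sub_add_cancel]

lemma exists_finset_bdry_of_two_le (hn : 3 ≤ n) (hP : CCW P) {m : ℕ} (hm : 2 ≤ m)
    {Q : Fin m → Pt} (hQ : hull Q ⊆ hull P) :
    ∃ W : Finset Pt, ↑W ⊆ bdry P ∧ W.card ≤ m ∧ hull Q ⊆ convexHull ℝ ↑W := by
  classical
  obtain ⟨k, rfl⟩ : ∃ k, m = k + 2 := ⟨m - 2, by omega⟩
  have hQP (s : Fin (k + 2)) : Q s ∈ hull P := hQ (subset_convexHull ℝ _ ⟨s, rfl⟩)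
  choose w hwb hws using fun s => hP.exists_mem_bdry_mem_segment hn (hQP 0) (hQP s)
  obtain ⟨u, hub, hu⟩ :=
    hP.exists_mem_bdry_mem_segment hn (bdry_subset_hull P (hwb 1)) (hQP 0)
  -- `Q 0` is the centre of projection, so the slot of `w 0` goes to `u`, with `Q 0 ∈ [w 1, u]`.
  set W := Finset.univ.image (Function.update w 0 u)
  have hwW {s : Fin (k + 2)} (hs : s ≠ 0) : w s ∈ W :=
    Finset.mem_image.mpr ⟨s, Finset.mem_univ _, Function.update_of_ne hs _ _⟩
  have huW : u ∈ W := Finset.mem_image.mpr ⟨0, Finset.mem_univ _, Function.update_self _ _ _⟩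
  have hconv := convex_convexHull ℝ (W : Set Pt)
  have hQ0 : Q 0 ∈ convexHull ℝ ↑W := hconv.segment_subset
    (subset_convexHull ℝ _ (hwW one_ne_zero)) (subset_convexHull ℝ _ huW) hu
  refine ⟨W, ?_, Finset.card_image_le.trans (by simp), convexHull_min ?_ hconv⟩
  · intro x hx
    obtain ⟨s, -, rfl⟩ := Finset.mem_image.mp hx
    by_cases hs : s = 0
    · simpa [hs] using hub
    · simpa [hs] using hwb s
  · rintro _ ⟨s, rfl⟩
    by_cases hs : s = 0
    · exact hs ▸ hQ0
    · exact hconv.segment_subset hQ0 (subset_convexHull ℝ _ (hwW hs)) (hws s)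

lemma exists_finset_bdry (hn : 3 ≤ n) (hP : CCW P) {m : ℕ} {Q : Fin m → Pt}
    (hQ : hull Q ⊆ hull P) :
    ∃ W : Finset Pt, ↑W ⊆ bdry P ∧ W.card ≤ max m 2 ∧
      hull Q ⊆ convexHull ℝ ↑W := by
  rcases le_or_gt 2 m with hm | hm
  · obtain ⟨W, hWb, hWc, hW⟩ := hP.exists_finset_bdry_of_two_le hn hm hQ
    exact ⟨W, hWb, hWc.trans (le_max_left _ _), hW⟩
  obtain ⟨v, hv, hQv⟩ : ∃ v ∈ hull P, Set.range Q ⊆ {v} := by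
    obtain rfl | rfl : m = 0 ∨ m = 1 := by omega
    · exact ⟨P 0, subset_convexHull ℝ _ ⟨0, rfl⟩, by simp [Set.range_eq_empty]⟩
    · refine ⟨Q 0, hQ (subset_convexHull ℝ _ ⟨0, rfl⟩), ?_⟩
      rintro _ ⟨s, rfl⟩
      simp [Subsingleton.elim s 0]
  have hconst : hull (fun _ : Fin 2 => v) = {v} := by simp [hull, Set.range_const]
  obtain ⟨W, hWb, hWc, hW⟩ :=
    hP.exists_finset_bdry_of_two_le hn le_rfl (hconst ▸ Set.singleton_subset_iff.mpr hv)
  have hQv' : hull Q ⊆ {v} := convexHull_min hQv (convex_singleton v)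
  exact ⟨W, hWb, hWc.trans (le_max_right _ _), hQv'.trans (hconst ▸ hW)⟩

end CCW

section Cover

open Classical

variable {n : ℕ}

def IsBdryCover [NeZero n] (P : Fin n → Pt) (K : Set Pt) (W : Finset Pt) : Prop :=
  ↑W ⊆ bdry P ∧ W.card ≤ n - 1 ∧ K ⊆ convexHull ℝ ↑W

/-- Since `n - 1 - W.card < n`, the weight orders covers lexicographically: first by the
number of points that are not vertices of `P`, then by the missing cardinality. -/
def coverWeight (P : Fin n → Pt) (W : Finset Pt) : ℕ :=
  (W.filter (· ∉ Set.range P)).card * n + (n - 1 - W.card)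

variable {P : Fin n → Pt} {W W' : Finset Pt}

lemma coverWeight_insert_lt {v : Pt} (hv : v ∈ Set.range P) (hvW : v ∉ W)
    (hW : W.card < n - 1) : coverWeight P (insert v W) < coverWeight P W := by
  unfold coverWeight
  rw [Finset.filter_insert, if_neg (not_not.mpr hv), Finset.card_insert_of_notMem hvW]
  omega

variable [NeZero n] {K : Set Pt}

lemma coverWeight_lt_of_card_filter_lt
    (h : (W'.filter (· ∉ Set.range P)).card < (W.filter (· ∉ Set.range P)).card) :
    coverWeight P W' < coverWeight P W := by
  have := Nat.mul_le_mul_right n h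
  rw [Nat.succ_mul] at this
  have := NeZero.pos n
  unfold coverWeight
  omega

lemma IsBdryCover.card_eq_and_card_filter_edge_le_one (hW : IsBdryCover P K W)
    (hmin : ∀ W', IsBdryCover P K W' → ¬ coverWeight P W' < coverWeight P W)
    {x : Pt} (hxW : x ∈ W) (hx : x ∉ Set.range P) {j : Fin n}
    (hxj : x ∈ segment ℝ (P j) (P (j + 1))) :
    W.card = n - 1 ∧ (W.filter (· ∈ segment ℝ (P j) (P (j + 1)))).card ≤ 1 := by
  set E := segment ℝ (P j) (P (j + 1))
  set W' := insert (P j) (insert (P (j + 1)) (W.filter (· ∉ E)))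
  have hcard : W'.card + (W.filter (· ∈ E)).card ≤ W.card + 2 :=
    W.card_insert_insert_filter_not_add_card_filter_le (P j) (P (j + 1)) (· ∈ E)
  have hxE : 0 < (W.filter (· ∈ E)).card := Finset.card_pos.mpr ⟨x, by simp [hxW, hxj]⟩
  -- Otherwise `W'` is a cover of smaller weight.
  suffices n - 1 < W'.card by have := hW.2.1; omega
  by_contra! hW'
  have hbdry : ↑W' ⊆ bdry P := by
    intro z hz
    simp only [W', Finset.coe_insert, Finset.coe_filter, Set.mem_insert_iff] at hz
    rcases hz with rfl | rfl | ⟨hz, -⟩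
    · exact Set.mem_iUnion.mpr ⟨j, left_mem_segment ℝ _ _⟩
    · exact Set.mem_iUnion.mpr ⟨j, right_mem_segment ℝ _ _⟩
    · exact hW.1 hz
  have hnv : W'.filter (· ∉ Set.range P) ⊂ W.filter (· ∉ Set.range P) := by
    refine (Finset.ssubset_iff_of_subset fun z hz => ?_).mpr
      ⟨x, Finset.mem_filter.mpr ⟨hxW, hx⟩, ?_⟩
    · simp only [W', Finset.mem_filter, Finset.mem_insert] at hz ⊢
      rcases hz with ⟨rfl | rfl | ⟨hz, -⟩, hzP⟩
      · exact absurd ⟨j, rfl⟩ hzP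
      · exact absurd ⟨j + 1, rfl⟩ hzP
      · exact ⟨hz, hzP⟩
    · simp only [W', Finset.mem_filter, Finset.mem_insert, not_and]
      rintro (rfl | rfl | ⟨-, hxE⟩)
      · exact absurd ⟨j, rfl⟩ hx
      · exact absurd ⟨j + 1, rfl⟩ hx
      · exact absurd hxj hxE
  exact hmin W' ⟨hbdry, hW', hW.2.2.trans (convexHull_subset_convexHull_replace_segment W _ _)⟩
    (coverWeight_lt_of_card_filter_lt (Finset.card_lt_card hnv))

lemma exists_isBdryCover_card_eq (hn : 3 ≤ n) (hP : CCW P) (hK : ∃ W, IsBdryCover P K W) :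
    ∃ W, IsBdryCover P K W ∧ W.card = n - 1 ∧
      ∀ x ∈ W, x ∉ Set.range P → ∀ j, x ∈ segment ℝ (P j) (P (j + 1)) →
        ∀ y ∈ W, y ∈ segment ℝ (P j) (P (j + 1)) → y = x := by
  obtain ⟨W, hW, hmin⟩ := (measure (coverWeight P)).wf.has_min {W | IsBdryCover P K W} hK
  refine ⟨W, hW, ?_, fun x hxW hx j hxj y hyW hyj => ?_⟩
  · by_contra hne
    have hcard : W.card < n - 1 := lt_of_le_of_ne hW.2.1 hne
    obtain ⟨j, hj⟩ : ∃ j, P j ∉ W := by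
      by_contra! hall
      have : (Finset.univ.image P).card ≤ W.card := Finset.card_le_card fun _ hz => by
        obtain ⟨j, -, rfl⟩ := Finset.mem_image.mp hz
        exact hall j
      rw [Finset.card_image_of_injective _ (hP.injective hn), Finset.card_univ,
        Fintype.card_fin] at this
      omega
    have hvert : P j ∈ bdry P := Set.mem_iUnion.mpr ⟨j, left_mem_segment ℝ _ _⟩
    refine hmin (insert (P j) W) ⟨?_, ?_, ?_⟩ (coverWeight_insert_lt ⟨j, rfl⟩ hj hcard)
    · rw [Finset.coe_insert]
      exact Set.insert_subset hvert hW.1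
    · rw [Finset.card_insert_of_notMem hj]
      omega
    · exact hW.2.2.trans (convexHull_mono (by simp [Set.subset_insert]))
  · have hsep := (hW.card_eq_and_card_filter_edge_le_one hmin hxW hx hxj).2
    exact Finset.card_le_one.mp hsep y (by simp [hyW, hyj]) x (by simp [hxW, hxj])

end Cover

lemma maxDegen_of_injective {n : ℕ} [NeZero n] {P : Fin n → Pt} {Q : Fin (n - 1) → Pt}
    (hinj : Function.Injective Q) (hbdry : ∀ k, Q k ∈ bdry P)
    (hsep : ∀ k, Q k ∉ Set.range P → ∀ i, Q k ∈ segment ℝ (P i) (P (i + 1)) →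
      ∀ k', Q k' ∈ segment ℝ (P i) (P (i + 1)) → k' = k) :
    MaxDegen P Q := by
  refine ⟨hbdry, fun k => ?_⟩
  by_cases hk : Q k ∈ Set.range P
  · obtain ⟨i, hi⟩ := hk
    exact Or.inl ⟨i, hi.symm, fun k' hk' h => hk' (hinj (h.trans hi))⟩
  · obtain ⟨i, hi⟩ := Set.mem_iUnion.mp (hbdry k)
    exact Or.inr ⟨i, hi, fun j h => hk ⟨j, h.symm⟩,
      fun k' hk' h => hk' (hsep k hk i hi k' h)⟩

/-- For every `m`-gon `Q` contained in the convex `n`-gon `P` with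
`m < n`, there is a maximal degenerate `(n-1)`-gon `Q'` interpolating between `Q`
and `P`. -/
theorem statement8 (n : ℕ) (hn : 3 ≤ n) [NeZero n] (P : Fin n → Pt) (hP : CCW P)
    (m : ℕ) (hm : m < n) (Q : Fin m → Pt) (hQ : hull Q ⊆ hull P) :
    ∃ Q' : Fin (n - 1) → Pt, MaxDegen P Q' ∧ hull Q ⊆ hull Q' ∧ hull Q' ⊆ hull P := by
  obtain ⟨W₀, hW₀⟩ := hP.exists_finset_bdry hn hQ
  obtain ⟨W, ⟨hWb, -, hQW⟩, hcard, hsep⟩ :=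
    exists_isBdryCover_card_eq hn hP ⟨W₀, hW₀.1, hW₀.2.1.trans (by omega), hW₀.2.2⟩
  obtain ⟨Q', hinj, hrange⟩ := W.exists_injective_range_eq hcard
  have hQ'W (k) : Q' k ∈ W := Finset.mem_coe.mp (hrange ▸ Set.mem_range_self k)
  have hhull : hull Q' = convexHull ℝ ↑W := by rw [hull, hrange]
  refine ⟨Q', maxDegen_of_injective hinj (fun k => hWb (hQ'W k)) ?_, hhull ▸ hQW, ?_⟩
  · intro k hk i hi k' hk'
    exact hinj (hsep _ (hQ'W k) hk i hi _ (hQ'W k') hk')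
  · rw [hhull]
    exact convexHull_min (hWb.trans (bdry_subset_hull P)) (convex_convexHull ℝ _)

end
end

section
/- Let P be an n-gon and N ∈ ℕ. The set of all n-gons attainable from P in at most N pull-in moves is a compact subset of (ℝ²)^n. -/
/-! For a fixed pair of indices `i ≠ j`, a pull-in move is the image of the pair (polygon, `t ∈ [0, 1]`)
under a continuous map, so the polygons one move away from a compact set form a finite union of
continuous images of compact sets, again compact. Induction on the number of moves then makes each
set of polygons reachable in exactly `m` moves compact, and the bound `N` leaves a finite union. -/

noncomputable section

section MoveChain

variable {n : ℕ} {R : (Fin n → Pt) → (Fin n → Pt) → Prop}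

lemma moveChain_zero_iff {P P' : Fin n → Pt} : MoveChain R 0 P P' ↔ P' = P := by
  constructor
  · rintro ⟨Q, h0, hl, -⟩
    rw [← hl, ← h0]
    rfl
  · rintro rfl
    exact ⟨fun _ => P', rfl, rfl, Fin.elim0⟩

lemma moveChain_succ_iff {m : ℕ} {P P' : Fin n → Pt} :
    MoveChain R (m + 1) P P' ↔ ∃ Q, MoveChain R m P Q ∧ R Q P' := by
  constructor
  · rintro ⟨Q, h0, hl, hR⟩
    refine ⟨Q (Fin.last m).castSucc, ⟨Q ∘ Fin.castSucc, h0, rfl, fun s => ?_⟩, ?_⟩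
    · simpa only [Function.comp_apply, Fin.succ_castSucc] using hR s.castSucc
    · simpa only [Fin.succ_last, hl] using hR (Fin.last m)
  · rintro ⟨Q', ⟨Q, h0, hl, hR⟩, hQ'⟩
    refine ⟨Fin.snoc Q P', by simpa using h0, Fin.snoc_last _ _, fun s => ?_⟩
    induction s using Fin.lastCases with
    | last => simpa [hl] using hQ'
    | cast s =>
      simp only [Fin.succ_castSucc, Fin.snoc_castSucc]
      exact hR s

lemma isCompact_setOf_moveChain
    (hR : ∀ K : Set (Fin n → Pt), IsCompact K → IsCompact {P' | ∃ Q ∈ K, R Q P'})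
    (P : Fin n → Pt) (m : ℕ) : IsCompact {P' | MoveChain R m P P'} := by
  induction m with
  | zero => simpa only [moveChain_zero_iff, Set.ofPred_eq_eq_singleton] using isCompact_singleton
  | succ m ih =>
    simp_rw [moveChain_succ_iff]
    exact hR _ ih

end MoveChain

lemma pullIn_iff {n : ℕ} {Q P' : Fin n → Pt} :
    PullIn Q P' ↔ ∃ i j, i ≠ j ∧ ∃ t ∈ Set.Icc (0 : ℝ) 1,
      Function.update Q i (AffineMap.lineMap (Q i) (Q j) t) = P' := by
  simp only [PullIn, segment_eq_image_lineMap, Function.update_eq_iff, Set.mem_image]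
  grind

lemma IsCompact.setOf_pullIn {n : ℕ} {K : Set (Fin n → Pt)} (hK : IsCompact K) :
    IsCompact {P' | ∃ Q ∈ K, PullIn Q P'} := by
  have hunion : {P' | ∃ Q ∈ K, PullIn Q P'} = ⋃ (i) (j) (_ : i ≠ j),
      (fun p : (Fin n → Pt) × ℝ => Function.update p.1 i (AffineMap.lineMap (p.1 i) (p.1 j) p.2))
        '' K ×ˢ Set.Icc 0 1 := by
    ext P'
    simp only [pullIn_iff, Set.mem_ofPred_eq, Set.mem_iUnion, Set.mem_image, Set.mem_prod,
      Prod.exists, exists_prop]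
    constructor
    · rintro ⟨Q, hQ, i, j, hij, t, ht, rfl⟩
      exact ⟨i, j, hij, Q, t, ⟨hQ, ht⟩, rfl⟩
    · rintro ⟨i, j, hij, Q, t, ⟨hQ, ht⟩, rfl⟩
      exact ⟨Q, hQ, i, j, hij, t, ht, rfl⟩
  rw [hunion]
  refine isCompact_iUnion fun i => isCompact_iUnion fun j => isCompact_iUnion fun _ =>
    (hK.prod isCompact_Icc).image ?_
  fun_prop

/-- The set of `n`-gons attainable from `P` in at most `N` pull-in
moves is compact. -/
theorem statement14 (n : ℕ) (P : Fin n → Pt) (N : ℕ) :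
    IsCompact {P' : Fin n → Pt | ∃ m : ℕ, m ≤ N ∧ MoveChain PullIn m P P'} := by
  have hunion : {P' : Fin n → Pt | ∃ m : ℕ, m ≤ N ∧ MoveChain PullIn m P P'} =
      ⋃ m ∈ Set.Iic N, {P' | MoveChain PullIn m P P'} := by
    ext; simp
  rw [hunion]
  exact (Set.finite_Iic N).isCompact_biUnion fun m _ =>
    isCompact_setOf_moveChain (fun _ => IsCompact.setOf_pullIn) P m

end
end

section
/- Let {P(t) : c_0 ≤ t ≤ c_1} be a continuous path of n-gons such that P(t) is set-convex for every t ∈ [c_0, c_1]. If P(c_0) is convex and oriented counterclockwise, then P(c_1) is convex and oriented counterclockwise. -/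
noncomputable section

/-!
Three distinct vertices of a set-convex polygon are never collinear: if they were, one of them
would lie on the segment spanned by the other two. Hence, for fixed indices `i` and `j`, the
orientation determinant `det3 (p_i(t), p_{i+1}(t), p_j(t))` is a continuous function of `t` that
never vanishes along the path, so by the intermediate value theorem it keeps the positive sign it
has at `c₀`.
-/

open Set

theorem IsPreconnected.lt_of_forall_ne {X α : Type*} [TopologicalSpace X] [LinearOrder α]
    [TopologicalSpace α] [OrderClosedTopology α] {s : Set X} (hs : IsPreconnected s)
    {f : X → α} (hf : ContinuousOn f s) {c : α} (hne : ∀ x ∈ s, f x ≠ c) {a b : X}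
    (ha : a ∈ s) (hb : b ∈ s) (hfa : c < f a) : c < f b := by
  by_contra! hfb
  obtain ⟨x, hx, hxc⟩ := hs.intermediate_value hb ha hf ⟨hfb, hfa.le⟩
  exact hne x hx hxc

theorem Fin.ne_add_one_of_ne {n : ℕ} [NeZero n] {i j : Fin n} (h : j ≠ i) : i ≠ i + 1 := by
  intro hi
  have hn : n = 1 := Fin.one_eq_zero_iff.mp (left_eq_add.mp hi)
  subst hn
  exact h (Subsingleton.elim _ _)

theorem ContinuousOn.det3 {X : Type*} [TopologicalSpace X] {s : Set X} {a b c : X → Pt}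
    (ha : ContinuousOn a s) (hb : ContinuousOn b s) (hc : ContinuousOn c s) :
    ContinuousOn (fun t => det3 (a t) (b t) (c t)) s := by
  have hcoord : ∀ {p : X → Pt}, ContinuousOn p s → ∀ k : Fin 2, ContinuousOn (fun t => p t k) s :=
    fun hp k => (PiLp.continuous_apply 2 _ k).comp_continuousOn hp
  unfold _root_.det3
  fun_prop (disch := exact hcoord ‹_› _)

theorem mem_affineSpan_pair_of_det3_eq_zero {a b c : Pt} (hab : a ≠ b) (h : det3 a b c = 0) :
    c ∈ line[ℝ, a, b] := by
  have of_coords : ∀ r : ℝ, c 0 - a 0 = r * (b 0 - a 0) → c 1 - a 1 = r * (b 1 - a 1) →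
      c ∈ line[ℝ, a, b] := by
    intro r h0 h1
    convert AffineMap.lineMap_mem_affineSpan_pair r a b
    ext k
    fin_cases k <;> simp [AffineMap.lineMap_apply] <;> linarith
  unfold det3 at h
  by_cases h0 : b 0 - a 0 = 0
  · have h1 : b 1 - a 1 ≠ 0 := fun h1 => hab (by ext k; fin_cases k <;> simp <;> linarith)
    refine of_coords ((c 1 - a 1) / (b 1 - a 1)) ?_ ?_
    · field_simp
      linear_combination -h
    · field_simp
  · refine of_coords ((c 0 - a 0) / (b 0 - a 0)) ?_ ?_
    · field_simp
    · field_simp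
      linear_combination h

namespace SetConvex

variable {n : ℕ} {P : Fin n → Pt}

theorem notMem_segment (hP : SetConvex P) {i j k : Fin n} (hj : j ≠ i) (hk : k ≠ i) :
    P i ∉ segment ℝ (P j) (P k) := fun h =>
  hP i <| convexHull_mono (s := {P j, P k})
    (pair_subset (mem_image_of_mem P hj) (mem_image_of_mem P hk))
    (by rwa [convexHull_pair])

theorem injective (hP : SetConvex P) : Function.Injective P := by
  intro i j hij
  by_contra hne
  exact hP.notMem_segment (Ne.symm hne) (Ne.symm hne) (by simp [hij])

theorem det3_ne_zero (hP : SetConvex P) {i j k : Fin n} (hij : i ≠ j) (hjk : j ≠ k)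
    (hik : i ≠ k) : det3 (P i) (P j) (P k) ≠ 0 := fun h => by
  have hcol := collinear_insert_of_mem_affineSpan_pair
    (mem_affineSpan_pair_of_det3_eq_zero (hP.injective.ne hij) h)
  rcases hcol.wbtw_or_wbtw_or_wbtw with hw | hw | hw
  · exact hP.notMem_segment hik.symm hij.symm hw.mem_segment
  · exact hP.notMem_segment hij hjk.symm hw.mem_segment
  · exact hP.notMem_segment hjk hik hw.mem_segment

end SetConvex

theorem statement15_general (n : ℕ) [NeZero n] (c0 c1 : ℝ) (hc : c0 ≤ c1)
    (F : ℝ → Fin n → Pt) (hcont : ContinuousOn F (Set.Icc c0 c1))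
    (hsc : ∀ t ∈ Set.Icc c0 c1, SetConvex (F t))
    (h0 : CCW (F c0)) :
    CCW (F c1) := by
  intro i j hji hji1
  have hvertex : ∀ k : Fin n, ContinuousOn (fun t => F t k) (Icc c0 c1) :=
    fun k => (continuous_apply k).comp_continuousOn hcont
  exact isPreconnected_Icc.lt_of_forall_ne
    ((hvertex i).det3 (hvertex (i + 1)) (hvertex j))
    (fun t ht => (hsc t ht).det3_ne_zero (Fin.ne_add_one_of_ne hji) (Ne.symm hji1) (Ne.symm hji))
    (left_mem_Icc.mpr hc) (right_mem_Icc.mpr hc) (h0 i j hji hji1)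

/-- Along a continuous path of set-convex polygons, being convex
oriented counterclockwise is preserved. -/
theorem statement15 (n : ℕ) (hn : 3 ≤ n) [NeZero n] (c0 c1 : ℝ) (hc : c0 ≤ c1)
    (F : ℝ → Fin n → Pt) (hcont : ContinuousOn F (Set.Icc c0 c1))
    (hsc : ∀ t ∈ Set.Icc c0 c1, SetConvex (F t))
    (h0 : CCW (F c0)) :
    CCW (F c1) :=
  statement15_general n c0 c1 hc F hcont hsc h0

end
end
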